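/- arXiv:2007.01552 — 10 statements merged into one kernel-verified Lean document; each statement's English description precedes it below -/
import Mathlib

section
/- Let n ≥ 1 voters each report one of three options: prefers a, prefers b, or indifferent. Let 𝐤 = (k_0, …, k_r) be a tuple of distinct elements of {0,1,…,n+1} with k_r ∈ {0, n+1}. Then for every profile P there exists a smallest index λ ≤ r such that either |D(a,P)| ≥ k_λ or |D(b,P)| ≥ n+1−k_λ, and exactly one of these two conditions holds at that smallest index λ (so the extended quota majority method φ_𝐤 is well-defined on all profiles). -/
/-- Number of voters preferring alternative `a`. -/
def countA (n : ℕ) (P : Fin n → Option Bool) : ℕ :=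
  (Finset.univ.filter fun v => P v = some true).card

/-- Number of voters preferring alternative `b`. -/
def countB (n : ℕ) (P : Fin n → Option Bool) : ℕ :=
  (Finset.univ.filter fun v => P v = some false).card

/-- The defining condition at quota `k`: at least `k` voters prefer `a`
or at least `n + 1 - k` voters prefer `b`. -/
def hits (n : ℕ) (P : Fin n → Option Bool) (k : ℕ) : Bool :=
  decide (k ≤ countA n P ∨ n + 1 - k ≤ countB n P)

/-- The (generalized) extended quota majority method attached to a list of quotas:
find the least index whose quota condition holds, and output `true` (= a) iff the
a-branch of that condition holds. -/
def phi (n : ℕ) (l : List ℕ) (P : Fin n → Option Bool) : Bool :=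
  decide (l.getD (l.findIdx (hits n P)) (n + 1) ≤ countA n P)

/-- A valid tuple for an extended quota majority method: nonempty, distinct entries
from `{0, …, n+1}`, last entry in `{0, n+1}`. -/
def Valid (n : ℕ) (l : List ℕ) : Prop :=
  l ≠ [] ∧ l.Nodup ∧ (∀ x ∈ l, x ≤ n + 1) ∧
    (l.getLast? = some 0 ∨ l.getLast? = some (n + 1))

lemma count_sum (n : ℕ) (P : Fin n → Option Bool) : countA n P + countB n P ≤ n := by
  classical
  have hd : Disjoint (Finset.univ.filter fun v => P v = some true)
      (Finset.univ.filter fun v => P v = some false) := by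
    simp [Finset.disjoint_left, Finset.mem_filter]
    intro a h h'; simp [h] at h'
  calc countA n P + countB n P
      = ((Finset.univ.filter fun v => P v = some true) ∪
          (Finset.univ.filter fun v => P v = some false)).card := by
        rw [Finset.card_union_of_disjoint hd]; rfl
    _ ≤ (Finset.univ : Finset (Fin n)).card := Finset.card_le_card (Finset.subset_univ _)
    _ = n := by simp

/-- for every tuple `k = (k_0, …, k_r)` of distinct elements of
`{0, …, n+1}` with `k_r ∈ {0, n+1}`, and every profile `P`, there is a smallest
index `λ` at which the quota condition holds, and exactly one of the two
alternatives of the condition holds at that index. -/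
theorem stmt_3 (n r : ℕ) (hn : 1 ≤ n) (k : Fin (r + 1) → ℕ)
    (hinj : Function.Injective k) (hbd : ∀ i, k i ≤ n + 1)
    (hlast : k (Fin.last r) = 0 ∨ k (Fin.last r) = n + 1) :
    ∀ P : Fin n → Option Bool,
      ∃ lam : Fin (r + 1),
        (k lam ≤ countA n P ∨ n + 1 - k lam ≤ countB n P) ∧
        (∀ μ : Fin (r + 1), μ < lam →
          ¬(k μ ≤ countA n P ∨ n + 1 - k μ ≤ countB n P)) ∧
        Xor' (k lam ≤ countA n P) (n + 1 - k lam ≤ countB n P) := by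
  classical
  intro P
  set T : Finset (Fin (r + 1)) :=
    Finset.univ.filter fun i => k i ≤ countA n P ∨ n + 1 - k i ≤ countB n P with hT
  have hne : T.Nonempty := by
    refine ⟨Fin.last r, ?_⟩
    simp only [hT, Finset.mem_filter, Finset.mem_univ, true_and]
    rcases hlast with h | h
    · left; omega
    · right; omega
  refine ⟨T.min' hne, ?_, ?_, ?_⟩
  · have := T.min'_mem hne
    simpa [hT] using this
  · intro μ hμ hcond
    have hμT : μ ∈ T := by simpa [hT] using hcond
    exact absurd (T.min'_le μ hμT) (not_le.mpr hμ)
  · have hmem := (Finset.mem_filter.mp (T.min'_mem hne)).2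
    have hsum := count_sum n P
    have hb := hbd (T.min' hne)
    rcases hmem with h | h
    · exact Or.inl ⟨h, by omega⟩
    · rcases le_or_gt (k (T.min' hne)) (countA n P) with h' | h'
      · exact Or.inl ⟨h', by omega⟩
      · exact Or.inr ⟨h, by omega⟩
end

section
/- Every extended quota majority method φ_𝐤 is non-manipulable: for every voter v, every profile P, and every alternative deviation Q_v of voter v's reported preference, the outcome φ_𝐤(P) is weakly preferred, according to voter v's true (reported) preference P_v, to the outcome φ_𝐤 when v reports Q_v instead (with all other reports unchanged). -/
/-! Moving one voter away from `x` can only lower the number of supporters of `x` and raise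
that of `!x`, so it suffices that `φ` is monotone in the supporters of `a`. For that, compare the
stopping indices `i` of `P` and `j` of `Q`, where `P` has at least as many `a`-votes and at most as
many `b`-votes as `Q`. If `Q` stops on its `a`-branch, then `P` hits at `j`, so `i ≤ j`; if moreover
`P` stopped on its `b`-branch, then `Q` hits at `i` too, so `i = j` and `P` stops on its
`a`-branch after all. -/

open Finset

section Update

variable {ι α : Type*} [Fintype ι] [DecidableEq ι] [DecidableEq α]

theorem card_filter_update_eq_le {f : ι → α} {i : ι} {a : α} (hi : f i = a) (b : α) :
    (univ.filter fun j => Function.update f i b j = a).card ≤ (univ.filter fun j => f j = a).card := by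
  refine card_le_card fun j hj => ?_
  simp only [mem_filter, mem_univ, true_and] at hj ⊢
  rcases eq_or_ne j i with rfl | hji
  · exact hi
  · rwa [Function.update_of_ne hji] at hj

theorem card_filter_eq_le_update {f : ι → α} {i : ι} {a : α} (hi : f i ≠ a) (b : α) :
    (univ.filter fun j => f j = a).card ≤ (univ.filter fun j => Function.update f i b j = a).card := by
  refine card_le_card fun j hj => ?_
  simp only [mem_filter, mem_univ, true_and] at hj ⊢
  rwa [Function.update_of_ne (by rintro rfl; exact hi hj)]

end Update

theorem List.findIdx_le_of_getElem {α : Type*} {p : α → Bool} {xs : List α} {i : ℕ}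
    (hi : i < xs.length) (h : p xs[i]) : xs.findIdx p ≤ i :=
  le_of_not_gt fun hlt => by simp [List.not_of_lt_findIdx hlt] at h

theorem Valid.findIdx_hits_lt_length {n : ℕ} {l : List ℕ} (hv : Valid n l)
    (P : Fin n → Option Bool) : l.findIdx (hits n P) < l.length := by
  refine List.findIdx_lt_length_of_exists ?_
  rcases hv.2.2.2 with h | h
  · exact ⟨0, List.mem_of_getLast? h, by simp [hits]⟩
  · exact ⟨n + 1, List.mem_of_getLast? h, by simp [hits]⟩

theorem phi_le_phi {n : ℕ} {l : List ℕ} (hv : Valid n l) {P Q : Fin n → Option Bool}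
    (hA : countA n Q ≤ countA n P) (hB : countB n P ≤ countB n Q) : phi n l Q ≤ phi n l P := by
  rw [Bool.le_iff_imp]
  intro hQ
  have hPlt := hv.findIdx_hits_lt_length P
  have hQlt := hv.findIdx_hits_lt_length Q
  have hPi : hits n P l[l.findIdx (hits n P)] := List.findIdx_getElem
  simp only [phi, List.getD_eq_getElem _ _ hPlt, List.getD_eq_getElem _ _ hQlt,
    decide_eq_true_eq] at hQ ⊢
  simp only [hits, decide_eq_true_eq] at hPi
  refine hPi.elim id fun hPb => ?_
  have hij : l.findIdx (hits n P) ≤ l.findIdx (hits n Q) :=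
    List.findIdx_le_of_getElem hQlt (by simp only [hits, decide_eq_true_eq]; omega)
  have hji : l.findIdx (hits n Q) ≤ l.findIdx (hits n P) :=
    List.findIdx_le_of_getElem hPlt (by simp only [hits, decide_eq_true_eq]; omega)
  simpa only [le_antisymm hij hji] using hQ.trans hA

theorem stmt_5_general (n : ℕ) (l : List ℕ) (hv : Valid n l) :
    ∀ (v : Fin n) (P : Fin n → Option Bool) (q : Option Bool) (x : Bool),
      P v = some x → phi n l (Function.update P v q) = x → phi n l P = x := by
  intro v P q x hPv hQ
  cases x with
  | false =>
    have hle : phi n l P ≤ phi n l (Function.update P v q) :=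
      phi_le_phi hv (card_filter_eq_le_update (by simp [hPv]) q) (card_filter_update_eq_le hPv q)
    exact Bool.eq_false_of_le_false (hQ ▸ hle)
  | true =>
    have hle : phi n l (Function.update P v q) ≤ phi n l P :=
      phi_le_phi hv (card_filter_update_eq_le hPv q) (card_filter_eq_le_update (by simp [hPv]) q)
    exact Bool.eq_true_of_true_le (hQ ▸ hle)

/-- extended quota majority methods are non-manipulable: a voter whose
report is a strict preference for `x` and who, by deviating, would obtain outcome `x`,
already obtains outcome `x` by reporting truthfully. -/
theorem stmt_5 (n : ℕ) (hn : 1 ≤ n) (l : List ℕ) (hv : Valid n l) :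
    ∀ (v : Fin n) (P : Fin n → Option Bool) (q : Option Bool) (x : Bool),
      P v = some x → phi n l (Function.update P v q) = x → phi n l P = x :=
  stmt_5_general n l hv
end

section
/- Deletion lemma: Let 𝐡 = (h_0, h_1, …, h_s) be a sequence of elements of {0,…,n+1} containing some entry in {0,n+1}, defining a generalized extended quota majority method φ_𝐡. If there exist indices α, β < γ with h_β ≥ h_γ ≥ h_α, then the scf obtained by deleting h_γ from the sequence equals φ_𝐡 on all profiles. -/
lemma getElem_idx_congr (l : List ℕ) {i j : ℕ} (h : i = j) (hi : i < l.length) :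
    l[i] = l[j]'(h ▸ hi) := by subst h; rfl

/-- deletion lemma: if indices `α, β < γ` satisfy
`h_β ≥ h_γ ≥ h_α`, then deleting the entry at position `γ` does not change the
generalized extended quota majority method. -/
theorem stmt_8 (n : ℕ) (hn : 1 ≤ n) (l : List ℕ)
    (hbd : ∀ x ∈ l, x ≤ n + 1) (hex : ∃ x ∈ l, x = 0 ∨ x = n + 1)
    (α β γ : ℕ) (hαγ : α < γ) (hβγ : β < γ) (hγ : γ < l.length)
    (h1 : l.getD γ 0 ≤ l.getD β 0) (h2 : l.getD α 0 ≤ l.getD γ 0) :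
    ∀ P : Fin n → Option Bool, phi n (l.eraseIdx γ) P = phi n l P := by
  intro P
  set cA := countA n P with hcA
  set cB := countB n P with hcB
  have hitsIff : ∀ k, hits n P k = true ↔ (k ≤ cA ∨ n + 1 - k ≤ cB) := by
    intro k; simp [hits, hcA, hcB]
  -- existence of a hit
  obtain ⟨x, hxl, hx⟩ := hex
  have hxhit : hits n P x = true := by
    rcases hx with h | h <;> rw [hitsIff] <;> omega
  have hi : l.findIdx (hits n P) < l.length :=
    List.findIdx_lt_length_of_exists ⟨x, hxl, hxhit⟩
  set i := l.findIdx (hits n P) with hidef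
  have hhit : hits n P l[i] = true := List.findIdx_getElem (w := hi)
  have hα : α < l.length := lt_trans hαγ hγ
  have hβ : β < l.length := lt_trans hβγ hγ
  rw [List.getD_eq_getElem l 0 hγ, List.getD_eq_getElem l 0 hβ] at h1
  rw [List.getD_eq_getElem l 0 hα, List.getD_eq_getElem l 0 hγ] at h2
  have hne : i ≠ γ := by
    intro h
    have := hhit
    rw [getElem_idx_congr l h hi] at this
    rw [hitsIff] at this
    rcases this with hc | hc
    · have : hits n P l[α] = true := by rw [hitsIff]; omega
      have := List.not_of_lt_findIdx (p := hits n P) (xs := l) (i := α)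
        (by rw [← hidef]; omega)
      simp_all
    · have : hits n P l[β] = true := by rw [hitsIff]; omega
      have := List.not_of_lt_findIdx (p := hits n P) (xs := l) (i := β)
        (by rw [← hidef]; omega)
      simp_all
  have hlen : (l.eraseIdx γ).length = l.length - 1 := by
    rw [List.length_eraseIdx, if_pos hγ]
  rcases lt_or_gt_of_ne hne with hlt | hgt
  · -- i < γ : findIdx of erased list is i
    have hi' : i < (l.eraseIdx γ).length := by omega
    have hfind : (l.eraseIdx γ).findIdx (hits n P) = i := by
      rw [List.findIdx_eq hi']
      constructor
      · rw [List.getElem_eraseIdx, dif_pos hlt]; exact hhit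
      · intro j hj
        rw [List.getElem_eraseIdx, dif_pos (lt_trans hj hlt)]
        exact List.not_of_lt_findIdx (by omega)
    unfold phi
    rw [hfind, ← hidef, List.getD_eq_getElem _ _ hi', List.getD_eq_getElem _ _ hi,
      List.getElem_eraseIdx, dif_pos hlt]
  · -- γ < i : findIdx of erased list is i - 1
    have hi' : i - 1 < (l.eraseIdx γ).length := by omega
    have hfind : (l.eraseIdx γ).findIdx (hits n P) = i - 1 := by
      rw [List.findIdx_eq hi']
      constructor
      · rw [List.getElem_eraseIdx, dif_neg (by omega),
          getElem_idx_congr l (show i - 1 + 1 = i by omega)]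
        exact hhit
      · intro j hj
        rw [List.getElem_eraseIdx]
        split
        · exact List.not_of_lt_findIdx (by omega)
        · exact List.not_of_lt_findIdx (by omega)
    unfold phi
    rw [hfind, ← hidef, List.getD_eq_getElem _ _ hi', List.getD_eq_getElem _ _ hi,
      List.getElem_eraseIdx, dif_neg (by omega),
      getElem_idx_congr l (show i - 1 + 1 = i by omega)]
end

section
/- For two distinct quotas k_0 < h_0 in {0,…,n+1} with corresponding extended quota majority methods φ_𝐤 and φ_𝐡 (tuples 𝐤 starting with k_0, 𝐡 starting with h_0, both with entries in {0,…,n+1}, distinct, ending in {0,n+1}, and with 1 ≤ k_0, h_0 ≤ n), there exists a profile P with |D(a,P)| = k_0 and |D(b,P)| = n+1−h_0 on which φ_𝐤(P) = a but φ_𝐡(P) = b; hence φ_𝐤 ≠ φ_𝐡. -/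
lemma card_ico_fin (n a b : ℕ) (hb : b ≤ n) :
    (Finset.univ.filter fun v : Fin n => a ≤ (v : ℕ) ∧ (v : ℕ) < b).card = b - a := by
  rw [← Nat.card_Ico]
  refine Finset.card_bij (fun v _ => (v : ℕ)) ?_ ?_ ?_
  · intro v hv
    simp only [Finset.mem_filter] at hv
    simp [Finset.mem_Ico, hv.2.1, hv.2.2]
  · intro v _ w _ h
    exact Fin.val_injective h
  · intro x hx
    simp only [Finset.mem_Ico] at hx
    exact ⟨⟨x, lt_of_lt_of_le hx.2 hb⟩, by simp [hx.1, hx.2], rfl⟩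

/-- if `k_0 < h_0` (both in `{1, …, n}`), there is a profile with
exactly `k_0` voters for `a` and `n + 1 - h_0` voters for `b` on which `φ_k` gives
`a` and `φ_h` gives `b`; hence the two methods differ. -/
theorem stmt_10 (n : ℕ) (hn : 1 ≤ n) (k0 h0 : ℕ) (ks hs : List ℕ)
    (hvk : Valid n (k0 :: ks)) (hvh : Valid n (h0 :: hs))
    (hk01 : 1 ≤ k0) (hk0n : k0 ≤ n) (hh01 : 1 ≤ h0) (hh0n : h0 ≤ n)
    (hlt : k0 < h0) :
    (∃ P : Fin n → Option Bool,
      countA n P = k0 ∧ countB n P = n + 1 - h0 ∧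
      phi n (k0 :: ks) P = true ∧ phi n (h0 :: hs) P = false) ∧
    phi n (k0 :: ks) ≠ phi n (h0 :: hs) := by
  set m := n + 1 - h0 with hm
  have hkm : k0 + m ≤ n := by omega
  set P : Fin n → Option Bool := fun v =>
    if (v : ℕ) < k0 then some true else if (v : ℕ) < k0 + m then some false else none
    with hP
  have hA : countA n P = k0 := by
    have : (Finset.univ.filter fun v : Fin n => P v = some true) =
        (Finset.univ.filter fun v : Fin n => 0 ≤ (v : ℕ) ∧ (v : ℕ) < k0) := by
      apply Finset.filter_congr
      intro v _
      simp only [hP]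
      split_ifs with h1 h2 <;> simp [h1]
    rw [countA, this, card_ico_fin n 0 k0 (by omega)]; omega
  have hB : countB n P = m := by
    have : (Finset.univ.filter fun v : Fin n => P v = some false) =
        (Finset.univ.filter fun v : Fin n => k0 ≤ (v : ℕ) ∧ (v : ℕ) < k0 + m) := by
      apply Finset.filter_congr
      intro v _
      simp only [hP]
      split_ifs with h1 h2 <;> simp <;> omega
    rw [countB, this, card_ico_fin n k0 (k0 + m) hkm]
    omega
  have hhitk : hits n P k0 = true := by
    simp [hits, hA]
  have hhith : hits n P h0 = true := by
    simp only [hits, decide_eq_true_eq]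
    right; omega
  have hphik : phi n (k0 :: ks) P = true := by
    simp [phi, List.findIdx_cons, hhitk, hA]
  have hphih : phi n (h0 :: hs) P = false := by
    simp only [phi, List.findIdx_cons, hhith, cond_true, List.getD_cons_zero,
      decide_eq_false_iff_not, hA]
    omega
  refine ⟨⟨P, hA, hB, hphik, hphih⟩, fun h => ?_⟩
  have := congrFun h P
  rw [hphik, hphih] at this
  exact Bool.noConfusion this
end

section
/- Every extended quota majority method on n voters admits a proper representation: for every tuple 𝐣 = (j_0,…,j_r) of distinct elements of {0,…,n+1} with j_r ∈ {0,n+1}, there exists a subsequence 𝐤 = (k_0,…,k_t) of 𝐣 which is proper (the odd-indexed entries after k_0 alternately go strictly above and strictly below all previous entries in an up-down or down-up pattern, with k_t ∈ {0,n+1}) such that φ_𝐣 = φ_𝐤 as functions on all profiles. -/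
/-- A tuple `(k_0, k_1, …, k_t)` is proper: at least two entries, distinct entries
from `{0, …, n+1}`, last entry in `{0, n+1}`, any two consecutive entries of the
tail `k_1, k_2, …` lie strictly on opposite sides of `k_0`, and along each side the
entries become strictly more extreme. -/
def Proper (n : ℕ) (l : List ℕ) : Prop :=
  2 ≤ l.length ∧ l.Nodup ∧ (∀ x ∈ l, x ≤ n + 1) ∧
  (l.getLast? = some 0 ∨ l.getLast? = some (n + 1)) ∧
  (∀ i, i + 2 < l.length →
    (l.getD (i + 1) 0 < l.getD 0 0 ∧ l.getD 0 0 < l.getD (i + 2) 0) ∨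
    (l.getD (i + 2) 0 < l.getD 0 0 ∧ l.getD 0 0 < l.getD (i + 1) 0)) ∧
  (∀ i, i + 3 < l.length →
    (l.getD (i + 1) 0 < l.getD 0 0 → l.getD (i + 3) 0 < l.getD (i + 1) 0) ∧
    (l.getD 0 0 < l.getD (i + 1) 0 → l.getD (i + 1) 0 < l.getD (i + 3) 0))

/-!
An entry of the quota tuple only matters on profiles where every earlier quota is missed, and a
missed quota `z` means `countA < z` and `countB ≤ n - z`. Hence an entry lying strictly between
two earlier entries is itself always missed, and an entry `x` followed by `y` with an earlier
entry `z` such that `z < x < y` or `y < x < z` is, whenever it is hit, hit through the same branch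
as `y`, which is then hit too. Deleting such entries (never the first or the last one) does not
change the method. Once none is left, every later entry is strictly above or strictly below all
earlier ones, and consecutive entries of the tail lie on opposite sides of `k₀`: the tuple is
proper.
-/

section Quota

variable {n : ℕ} {P : Fin n → Option Bool}

lemma hits_eq_true_iff {k : ℕ} :
    hits n P k = true ↔ k ≤ countA n P ∨ n + 1 ≤ countB n P + k := by
  simp only [hits, decide_eq_true_eq]
  omega

lemma hits_eq_false_iff {k : ℕ} :
    hits n P k = false ↔ countA n P < k ∧ countB n P + k ≤ n := by
  simp only [hits, decide_eq_false_iff_not]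
  omega

lemma hits_eq_false_of_between {z₁ z₂ x : ℕ} (h₁ : hits n P z₁ = false)
    (h₂ : hits n P z₂ = false) (hz₁ : z₁ < x) (hz₂ : x < z₂) : hits n P x = false := by
  rw [hits_eq_false_iff] at *
  omega

lemma hits_beyond_of_hits {z x y : ℕ} (hz : hits n P z = false) (hx : hits n P x = true)
    (h : z < x ∧ x < y ∨ y < x ∧ x < z) :
    hits n P y = true ∧ (y ≤ countA n P ↔ x ≤ countA n P) := by
  rw [hits_eq_false_iff] at hz
  rw [hits_eq_true_iff] at *
  omega

lemma phi_cons_of_hits {x : ℕ} {t : List ℕ} (hx : hits n P x = true) :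
    phi n (x :: t) P = decide (x ≤ countA n P) := by
  simp [phi, List.findIdx_cons, hx]

lemma phi_cons_of_not_hits {x : ℕ} {t : List ℕ} (hx : hits n P x = false) :
    phi n (x :: t) P = phi n t P := by
  simp [phi, List.findIdx_cons, hx]

lemma phi_append_congr {u t t' : List ℕ}
    (h : (∀ z ∈ u, hits n P z = false) → phi n t P = phi n t' P) :
    phi n (u ++ t) P = phi n (u ++ t') P := by
  induction u with
  | nil => exact h (by simp)
  | cons a u ih =>
    cases ha : hits n P a
    · simp only [List.cons_append, phi_cons_of_not_hits ha]
      exact ih fun hu => h (List.forall_mem_cons.2 ⟨ha, hu⟩)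
    · simp only [List.cons_append, phi_cons_of_hits ha]

lemma phi_append_cons_of_between {u v : List ℕ} {x z₁ z₂ : ℕ} (h₁ : z₁ ∈ u) (h₂ : z₂ ∈ u)
    (hz₁ : z₁ < x) (hz₂ : x < z₂) : phi n (u ++ v) P = phi n (u ++ x :: v) P :=
  phi_append_congr fun hu =>
    (phi_cons_of_not_hits (hits_eq_false_of_between (hu _ h₁) (hu _ h₂) hz₁ hz₂)).symm

lemma phi_append_cons_cons_of_beyond {u v : List ℕ} {x y z : ℕ} (hz : z ∈ u)
    (h : z < x ∧ x < y ∨ y < x ∧ x < z) :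
    phi n (u ++ y :: v) P = phi n (u ++ x :: y :: v) P := by
  refine phi_append_congr fun hu => ?_
  cases hx : hits n P x
  · exact (phi_cons_of_not_hits hx).symm
  · obtain ⟨hy, hyx⟩ := hits_beyond_of_hits (hu z hz) hx h
    rw [phi_cons_of_hits hx, phi_cons_of_hits hy]
    exact decide_eq_decide.2 hyx

end Quota

section Sequences

variable {α : Type*} {l : List α} {d : α} {i j : ℕ}

lemma List.getD_mem_take (hji : j < i) (hi : i < l.length) : l.getD j d ∈ l.take i :=
  List.mem_take_iff_getElem.2 ⟨j, by omega, (List.getD_eq_getElem _ _ _).symm⟩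

lemma List.eq_take_append_getD_cons_drop (hi : i < l.length) :
    l = l.take i ++ l.getD i d :: l.drop (i + 1) := by
  rw [List.getD_eq_getElem _ _ hi, ← List.drop_eq_getElem_cons hi, List.take_append_drop]

lemma List.Nodup.getD_ne_getD (hl : l.Nodup) (hi : i < l.length) (hj : j < l.length)
    (hij : i ≠ j) : l.getD i d ≠ l.getD j d := by
  rw [List.getD_eq_getElem _ _ hi, List.getD_eq_getElem _ _ hj]
  exact fun h => hij (hl.getElem_inj_iff.1 h)

lemma List.getLast?_append_eq_getLast?_append_cons {u v : List α} (x : α) (hv : v ≠ []) :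
    (u ++ v).getLast? = (u ++ x :: v).getLast? := by
  rw [List.getLast?_append_of_ne_nil _ hv, List.getLast?_append_cons,
    List.getLast?_cons_of_ne_nil hv]

end Sequences

def HasRedundantEntry (n : ℕ) (l : List ℕ) : Prop :=
  ∃ u x v, l = u ++ x :: v ∧ u ≠ [] ∧ v ≠ [] ∧
    ∀ P : Fin n → Option Bool, phi n (u ++ v) P = phi n l P

section Redundant

variable {n : ℕ} {l : List ℕ} {i j : ℕ}

lemma hasRedundantEntry_of_between {j' : ℕ} (hj : j < i) (hj' : j' < i) (hi : i + 1 < l.length)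
    (h₁ : l.getD j 0 < l.getD i 0) (h₂ : l.getD i 0 < l.getD j' 0) : HasRedundantEntry n l := by
  have hl := List.eq_take_append_getD_cons_drop (d := 0) (by omega : i < l.length)
  have hj₁ := List.getD_mem_take (d := 0) hj (by omega : i < l.length)
  have hj₂ := List.getD_mem_take (d := 0) hj' (by omega : i < l.length)
  refine ⟨_, _, _, hl, List.ne_nil_of_mem hj₁, ?_, fun P => ?_⟩
  · simp only [ne_eq, List.drop_eq_nil_iff, not_le]
    omega
  · rw [phi_append_cons_of_between hj₁ hj₂ h₁ h₂, ← hl]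

lemma hasRedundantEntry_of_beyond (hj : j < i) (hi : i + 1 < l.length)
    (h : l.getD j 0 < l.getD i 0 ∧ l.getD i 0 < l.getD (i + 1) 0 ∨
      l.getD (i + 1) 0 < l.getD i 0 ∧ l.getD i 0 < l.getD j 0) : HasRedundantEntry n l := by
  have hl := List.eq_take_append_getD_cons_drop (d := 0) (by omega : i < l.length)
  have hv : l.drop (i + 1) = l.getD (i + 1) 0 :: l.drop (i + 2) := by
    rw [List.getD_eq_getElem _ _ hi, List.drop_eq_getElem_cons hi]
  have hj₁ := List.getD_mem_take (d := 0) hj (by omega : i < l.length)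
  refine ⟨_, _, _, hl, List.ne_nil_of_mem hj₁, by simp [hv], fun P => ?_⟩
  rw [hv, phi_append_cons_cons_of_beyond hj₁ h, ← hv, ← hl]

def IsRecordAt (l : List ℕ) (i : ℕ) : Prop :=
  (∀ j < i, l.getD j 0 < l.getD i 0) ∨ (∀ j < i, l.getD i 0 < l.getD j 0)

lemma isRecordAt_of_not_hasRedundantEntry (h : ¬HasRedundantEntry n l) (hnd : l.Nodup)
    (hbd : ∀ x ∈ l, x ≤ n + 1) (hlast : l.getLast? = some 0 ∨ l.getLast? = some (n + 1))
    (hi : i < l.length) : IsRecordAt l i := by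
  have hne : ∀ j < i, l.getD j 0 ≠ l.getD i 0 := fun j hj =>
    hnd.getD_ne_getD (by omega) hi (by omega)
  unfold IsRecordAt
  rcases Nat.lt_or_ge (i + 1) l.length with hi' | hi'
  · by_contra! hc
    obtain ⟨⟨j, hj, h₁⟩, j', hj', h₂⟩ := hc
    exact h (hasRedundantEntry_of_between hj' hj hi' (by grind) (by grind))
  · have hbd' : ∀ j < i, l.getD j 0 ≤ n + 1 := fun j hj => by
      rw [List.getD_eq_getElem _ _ (by omega)]
      exact hbd _ (List.getElem_mem _)
    have hl : l.getLast? = some (l.getD i 0) := by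
      rw [List.getLast?_eq_getElem?, List.getD_eq_getElem _ _ hi]
      simp [show l.length - 1 = i by omega]
    rw [hl, Option.some_inj, Option.some_inj] at hlast
    rcases hlast with h0 | h0
    · exact Or.inr fun j hj => by grind
    · exact Or.inl fun j hj => by grind

lemma lt_getD_succ_iff_of_not_hasRedundantEntry (h : ¬HasRedundantEntry n l) (hnd : l.Nodup)
    (hrec : IsRecordAt l (i + 1)) (hi₀ : 0 < i) (hi : i + 1 < l.length) :
    l.getD 0 0 < l.getD (i + 1) 0 ↔ l.getD i 0 < l.getD 0 0 := by
  have hne := hnd.getD_ne_getD (d := 0) (by omega : i < l.length) (by omega) hi₀.ne'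
  rcases hrec with hup | hdown
  · refine iff_of_true (hup 0 (by omega)) ?_
    by_contra hc
    exact h (hasRedundantEntry_of_beyond hi₀ hi (Or.inl ⟨by omega, hup i (by omega)⟩))
  · refine iff_of_false (by have := hdown 0 (by omega); omega) ?_
    intro hc
    exact h (hasRedundantEntry_of_beyond hi₀ hi (Or.inr ⟨hdown i (by omega), hc⟩))

lemma proper_of_not_hasRedundantEntry (hlen : 2 ≤ l.length) (hnd : l.Nodup)
    (hbd : ∀ x ∈ l, x ≤ n + 1) (hlast : l.getLast? = some 0 ∨ l.getLast? = some (n + 1))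
    (h : ¬HasRedundantEntry n l) : Proper n l := by
  have hrec : ∀ i < l.length, IsRecordAt l i := fun i =>
    isRecordAt_of_not_hasRedundantEntry h hnd hbd hlast
  have halt : ∀ i, 0 < i → i + 1 < l.length →
      (l.getD 0 0 < l.getD (i + 1) 0 ↔ l.getD i 0 < l.getD 0 0) := fun i hi₀ hi =>
    lt_getD_succ_iff_of_not_hasRedundantEntry h hnd (hrec _ hi) hi₀ hi
  have hne : ∀ i, 0 < i → i < l.length → l.getD i 0 ≠ l.getD 0 0 := fun i hi₀ hi =>
    hnd.getD_ne_getD hi (by omega) hi₀.ne'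
  refine ⟨hlen, hnd, hbd, hlast, fun i hi => ?_, fun i hi => ?_⟩
  · have : l.getD 0 0 < l.getD (i + 2) 0 ↔ l.getD (i + 1) 0 < l.getD 0 0 :=
      halt (i + 1) (by omega) hi
    have := hne (i + 1) (by omega) (by omega)
    have := hne (i + 2) (by omega) hi
    omega
  · have : l.getD 0 0 < l.getD (i + 2) 0 ↔ l.getD (i + 1) 0 < l.getD 0 0 :=
      halt (i + 1) (by omega) (by omega)
    have : l.getD 0 0 < l.getD (i + 3) 0 ↔ l.getD (i + 2) 0 < l.getD 0 0 :=
      halt (i + 2) (by omega) hi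
    have := hne (i + 1) (by omega) (by omega)
    have := hne (i + 2) (by omega) (by omega)
    have := hne (i + 3) (by omega) hi
    rcases hrec (i + 3) hi with hup | hdown
    · have := hup 0 (by omega)
      have := hup (i + 1) (by omega)
      omega
    · have := hdown 0 (by omega)
      have := hdown (i + 1) (by omega)
      omega

end Redundant

theorem stmt_11_general (n : ℕ) (l : List ℕ)
    (hlen : 2 ≤ l.length) (hnd : l.Nodup) (hbd : ∀ x ∈ l, x ≤ n + 1)
    (hlast : l.getLast? = some 0 ∨ l.getLast? = some (n + 1)) :
    ∃ k : List ℕ, k.Sublist l ∧ Proper n k ∧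
      ∀ P : Fin n → Option Bool, phi n k P = phi n l P := by
  induction hN : l.length using Nat.strong_induction_on generalizing l with
  | _ N ih =>
  by_cases hred : HasRedundantEntry n l
  · obtain ⟨u, x, v, rfl, hu, hv, hphi⟩ := hred
    have hsub : (u ++ v).Sublist (u ++ x :: v) :=
      (List.Sublist.refl u).append (List.sublist_cons_self x v)
    have hlen' : 2 ≤ (u ++ v).length := by
      have := List.length_pos_iff.2 hu
      have := List.length_pos_iff.2 hv
      simp only [List.length_append]
      omega
    obtain ⟨k, hk, hproper, hk_phi⟩ := ih (u ++ v).length (by simp [← hN]) (u ++ v) hlen'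
      (hsub.nodup hnd) (fun y hy => hbd y (hsub.mem hy))
      (List.getLast?_append_eq_getLast?_append_cons x hv ▸ hlast) rfl
    exact ⟨k, hk.trans hsub, hproper, fun P => (hk_phi P).trans (hphi P)⟩
  · exact ⟨l, List.Sublist.refl l, proper_of_not_hasRedundantEntry hlen hnd hbd hlast hred,
      fun _ => rfl⟩

/-- every extended quota majority method admits a proper
representation by a subsequence of its defining tuple. -/
theorem stmt_11 (n : ℕ) (hn : 1 ≤ n) (l : List ℕ)
    (hlen : 2 ≤ l.length) (hnd : l.Nodup) (hbd : ∀ x ∈ l, x ≤ n + 1)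
    (hlast : l.getLast? = some 0 ∨ l.getLast? = some (n + 1)) :
    ∃ k : List ℕ, k.Sublist l ∧ Proper n k ∧
      ∀ P : Fin n → Option Bool, phi n k P = phi n l P :=
  stmt_11_general n l hlen hnd hbd hlast
end

section
/- Uniqueness of the first quota: if two extended quota majority methods φ_𝐤 (with 𝐤 = (k_0,…,k_{r-1}, n+1)) and φ_𝐡 (with 𝐡 = (h_0,…,h_{s-1}, n+1)), both with all initial entries in {1,…,n}, are equal as functions on all profiles with n voters, then k_0 = h_0. -/
/-- the test profile: `a` voters for a, then `b` voters for b, rest indifferent -/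
def prof (n a b : ℕ) : Fin n → Option Bool := fun v =>
  if v.val < a then some true else if v.val < a + b then some false else none

lemma countA_prof (n a b : ℕ) (h : a + b ≤ n) : countA n (prof n a b) = a := by
  unfold countA prof
  have : (Finset.univ.filter fun v : Fin n =>
      (if v.val < a then some true else if v.val < a + b then some false else none) = some true)
      = Finset.univ.filter fun v : Fin n => v.val < a := by
    apply Finset.filter_congr; intro v _
    split_ifs <;> simp_all
  rw [this, ← Finset.card_range a]
  apply Finset.card_bij' (fun v _ => v.val) (fun m hm => ⟨m, by simp at hm; omega⟩) <;>
    simp +contextual [Nat.lt_of_lt_of_le]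

lemma countB_prof (n a b : ℕ) (h : a + b ≤ n) : countB n (prof n a b) = b := by
  unfold countB prof
  have : (Finset.univ.filter fun v : Fin n =>
      (if v.val < a then some true else if v.val < a + b then some false else none) = some false)
      = Finset.univ.filter fun v : Fin n => a ≤ v.val ∧ v.val < a + b := by
    apply Finset.filter_congr; intro v _
    split_ifs <;> simp_all <;> omega
  rw [this, ← Finset.card_range b]
  apply Finset.card_bij' (fun v _ => v.val - a) (fun m hm => ⟨a + m, by simp at hm; omega⟩) <;>
    simp +contextual <;> omega

/-- if `k0 < h0` then the two methods differ on the test profile -/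
lemma key (n : ℕ) (k0 h0 : ℕ) (ks hs : List ℕ)
    (hk : 1 ≤ k0 ∧ k0 ≤ n) (hh : 1 ≤ h0 ∧ h0 ≤ n) (hlt : k0 < h0)
    (heq : phi n (k0 :: ks ++ [n + 1]) = phi n (h0 :: hs ++ [n + 1])) : False := by
  have hle : k0 + (n + 1 - h0) ≤ n := by omega
  have hA : countA n (prof n k0 (n + 1 - h0)) = k0 := countA_prof n _ _ hle
  have hB : countB n (prof n k0 (n + 1 - h0)) = n + 1 - h0 := countB_prof n _ _ hle
  have h1 : phi n (k0 :: ks ++ [n + 1]) (prof n k0 (n + 1 - h0)) = true := by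
    unfold phi
    rw [List.cons_append, List.findIdx_cons]
    have : hits n (prof n k0 (n + 1 - h0)) k0 = true := by unfold hits; simp [hA]
    simp [this, hA]
  have h2 : phi n (h0 :: hs ++ [n + 1]) (prof n k0 (n + 1 - h0)) = false := by
    unfold phi
    rw [List.cons_append, List.findIdx_cons]
    have : hits n (prof n k0 (n + 1 - h0)) h0 = true := by unfold hits; simp [hB]
    simp [this, hA]
    omega
  rw [congrFun heq (prof n k0 (n + 1 - h0))] at h1
  rw [h1] at h2
  simp at h2

/-- uniqueness of the first quota: if two extended quota majority
methods, given by tuples `(k_0, …, k_{r-1}, n+1)` and `(h_0, …, h_{s-1}, n+1)` with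
all initial entries in `{1, …, n}`, are equal as functions, then `k_0 = h_0`. -/
theorem stmt_12 (n : ℕ) (hn : 1 ≤ n) (k0 h0 : ℕ) (ks hs : List ℕ)
    (hknd : (k0 :: ks ++ [n + 1]).Nodup) (hhnd : (h0 :: hs ++ [n + 1]).Nodup)
    (hkin : ∀ x ∈ k0 :: ks, 1 ≤ x ∧ x ≤ n) (hhin : ∀ x ∈ h0 :: hs, 1 ≤ x ∧ x ≤ n)
    (heq : phi n (k0 :: ks ++ [n + 1]) = phi n (h0 :: hs ++ [n + 1])) :
    k0 = h0 := by
  rcases lt_trichotomy k0 h0 with h | h | h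
  · exact absurd (key n k0 h0 ks hs (hkin k0 (by simp)) (hhin h0 (by simp)) h heq) id
  · exact h
  · exact absurd (key n h0 k0 hs ks (hhin h0 (by simp)) (hkin k0 (by simp)) h heq.symm) id
end

section
/- There are exactly 2^{n+1} anonymous, non-manipulable binary social choice functions on a society of n voters who choose between two alternatives a and b and are allowed to declare indifference. -/
/-- Anonymity: the outcome is invariant under permutations of the voters. -/
def Anonymous (n : ℕ) (f : (Fin n → Option Bool) → Bool) : Prop :=
  ∀ (σ : Equiv.Perm (Fin n)) (P : Fin n → Option Bool), f (P ∘ σ) = f P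

/-- Non-manipulability: a voter whose report is a strict preference for `x` and who,
by deviating, would obtain outcome `x`, already obtains outcome `x` truthfully. -/
def NonManipulable (n : ℕ) (f : (Fin n → Option Bool) → Bool) : Prop :=
  ∀ (v : Fin n) (P : Fin n → Option Bool) (q : Option Bool) (x : Bool),
    P v = some x → f (Function.update P v q) = x → f P = x

/-!
An anonymous rule depends only on the numbers `a` and `b` of voters preferring `a` and `b`, and
non-manipulability says exactly that the outcome is monotone when `a` grows or `b` shrinks: one
voter withdrawing a strict preference moves `(a, b)` by one step, and any two comparable count
vectors are joined by such steps. On each diagonal `a + b = m` a monotone rule chooses `a` iff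
`a ≥ T m`, and monotonicity forces `T 0 ≤ 1` and `T (m + 1) - T m ∈ {0, 1}`. Such rules are thus
in bijection with the jump patterns of `T` on `0, …, n`, i.e. with bit strings of length `n + 1`.
-/

open Finset

theorem card_filter_update_add {α β : Type*} [Fintype α] [DecidableEq α] (p : β → Prop)
    [DecidablePred p] (P : α → β) (v : α) (q : β) :
    #{w | p (Function.update P v q w)} + (if p (P v) then 1 else 0)
      = #{w | p (P w)} + if p q then 1 else 0 := by
  have hsplit (R : α → β) :
      #{w | p (R w)} = #{w ∈ univ.erase v | p (R w)} + if p (R v) then 1 else 0 := by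
    rw [card_filter, card_filter, ← add_sum_erase _ _ (mem_univ v), add_comm]
  have hrest : #{w ∈ univ.erase v | p (Function.update P v q w)} = #{w ∈ univ.erase v | p (P w)} :=
    congrArg card <| filter_congr fun w hw => by rw [Function.update_of_ne (ne_of_mem_erase hw)]
  rw [hsplit, hsplit P, Function.update_self, hrest, add_right_comm]

theorem exists_perm_eq_comp_of_card_fiber_eq {α β : Type*} [Fintype α] [DecidableEq β]
    {P Q : α → β} (h : ∀ b, #{x | P x = b} = #{x | Q x = b}) :
    ∃ σ : Equiv.Perm α, P = Q ∘ σ :=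
  ⟨Equiv.ofFiberEquiv fun b =>
      Fintype.equivOfCardEq (by simpa only [Fintype.card_subtype] using h b),
    funext fun x => (Equiv.ofFiberEquiv_map _ x).symm⟩

namespace Nat

theorem lt_count_iff_of_antitone {p : ℕ → Prop} [DecidablePred p] (hp : Antitone p) {a m : ℕ}
    (ha : a < m) : p a ↔ a < count p m := by
  constructor
  · intro hpa
    calc a < count p (a + 1) := by
          rw [count_iff_forall.2 fun b hb => hp (by omega) hpa]; omega
      _ ≤ count p m := count_monotone p ha
  · intro hlt
    by_contra hpa
    have hrest : count (fun k => p (a + k)) (m - a) = 0 :=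
      count_iff_forall_not.2 fun k _ hk => hpa (hp (by omega) hk)
    have := count_add p a (m - a)
    rw [Nat.add_sub_cancel' ha.le, hrest] at this
    have := count_le (p := p) (n := a)
    omega

theorem count_eq_count_of_forall_lt_iff {p q : ℕ → Prop} [DecidablePred p] [DecidablePred q]
    {m : ℕ} (h : ∀ k < m, p k ↔ q k) : count p m = count q m :=
  le_antisymm (count_mono_left fun k hk => (h k hk).1) (count_mono_left fun k hk => (h k hk).2)

theorem forall_iff_of_count_succ_eq {p q : ℕ → Prop} [DecidablePred p] [DecidablePred q]
    {m : ℕ} (h : ∀ k ≤ m, count p (k + 1) = count q (k + 1)) : ∀ k ≤ m, p k ↔ q k := by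
  have h' : ∀ k ≤ m + 1, count p k = count q k := fun
    | 0, _ => by simp
    | k + 1, hk => h k (by omega)
  intro k hk
  rw [← not_iff_not, ← count_succ_eq_count_iff, ← count_succ_eq_count_iff, h' k (by omega),
    h' (k + 1) (by omega)]

theorem count_lt_eq_min (k m : ℕ) : count (· < k) m = min k m := by
  rw [count_eq_card_filter_range, ← card_range (min k m)]
  congr 1
  ext i
  simp only [mem_filter, mem_range]
  omega

end Nat

def quota (c : ℕ → Bool) (m : ℕ) : ℕ := Nat.count (c · = true) (m + 1)

theorem quota_le_quota_add (c : ℕ → Bool) (m k : ℕ) : quota c (m + k) ≤ quota c m + k := by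
  rw [quota, quota, add_right_comm, Nat.count_add]
  exact Nat.add_le_add_left (Nat.count_le _) _

def bitsOf (T : ℕ → ℕ) : ℕ → Bool
  | 0 => decide (0 < T 0)
  | m + 1 => decide (T m < T (m + 1))

theorem quota_bitsOf {T : ℕ → ℕ} (h0 : T 0 ≤ 1) (hmono : ∀ m, T m ≤ T (m + 1))
    (hstep : ∀ m, T (m + 1) ≤ T m + 1) : quota (bitsOf T) = T := by
  funext m
  induction m with
  | zero =>
    rw [quota, Nat.count_one, bitsOf]
    split_ifs with h <;> simp only [decide_eq_true_eq] at h <;> omega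
  | succ m ih =>
    have := hmono m
    have := hstep m
    rw [quota, Nat.count_succ, ← quota, ih, bitsOf]
    split_ifs with h <;> simp only [decide_eq_true_eq] at h <;> omega

section Profiles

variable {n : ℕ}

theorem card_none_add_countA_add_countB (P : Fin n → Option Bool) :
    #{v | P v = none} + countB n P + countA n P = n := by
  have := card_eq_sum_card_fiberwise (s := univ) (t := univ) (f := P) fun _ _ => mem_univ _
  simp only [card_univ, Fintype.card_fin, Fintype.sum_option, Fintype.sum_bool] at this
  rw [countA, countB]; omega

theorem countA_update (P : Fin n → Option Bool) (v : Fin n) (q : Option Bool) :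
    countA n (Function.update P v q) + (if P v = some true then 1 else 0)
      = countA n P + if q = some true then 1 else 0 :=
  card_filter_update_add (· = some true) P v q

theorem countB_update (P : Fin n → Option Bool) (v : Fin n) (q : Option Bool) :
    countB n (Function.update P v q) + (if P v = some false then 1 else 0)
      = countB n P + if q = some false then 1 else 0 :=
  card_filter_update_add (· = some false) P v q

theorem countA_comp_perm (P : Fin n → Option Bool) (σ : Equiv.Perm (Fin n)) :
    countA n (P ∘ σ) = countA n P := by
  simp only [countA, ← Fintype.card_subtype]
  exact Fintype.card_congr (σ.subtypeEquiv fun _ => Iff.rfl)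

theorem countB_comp_perm (P : Fin n → Option Bool) (σ : Equiv.Perm (Fin n)) :
    countB n (P ∘ σ) = countB n P := by
  simp only [countB, ← Fintype.card_subtype]
  exact Fintype.card_congr (σ.subtypeEquiv fun _ => Iff.rfl)

theorem Anonymous.eq_of_counts_eq {f : (Fin n → Option Bool) → Bool} (hf : Anonymous n f)
    {P Q : Fin n → Option Bool} (hA : countA n P = countA n Q) (hB : countB n P = countB n Q) :
    f P = f Q := by
  have hP := card_none_add_countA_add_countB P
  have hQ := card_none_add_countA_add_countB Q
  obtain ⟨σ, rfl⟩ := exists_perm_eq_comp_of_card_fiber_eq (P := P) (Q := Q) fun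
    | none => by omega
    | some true => hA
    | some false => hB
  exact hf σ Q

def stdProfile (n a b : ℕ) : Fin n → Option Bool := fun v =>
  if (v : ℕ) < a then some true else if (v : ℕ) < a + b then some false else none

theorem countA_stdProfile (a b : ℕ) : countA n (stdProfile n a b) = min n a := by
  rw [countA, ← Fin.card_filter_val_lt]
  congr 1
  refine filter_congr fun v _ => ?_
  unfold stdProfile
  split_ifs <;> simp_all

theorem countB_stdProfile (a b : ℕ) :
    countB n (stdProfile n a b) = min n (a + b) - min n a := by
  have hnone : #{v | stdProfile n a b v = none} = #{v : Fin n | ¬ (v : ℕ) < a + b} :=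
    congrArg card <| filter_congr fun v _ => by unfold stdProfile; split_ifs <;> simp_all; omega
  have hsplit := card_filter_add_card_filter_not (s := univ) fun v : Fin n => (v : ℕ) < a + b
  have hpart := card_none_add_countA_add_countB (stdProfile n a b)
  rw [Fin.card_filter_val_lt, card_univ, Fintype.card_fin] at hsplit
  rw [countA_stdProfile] at hpart
  omega

def CountMonotone (n : ℕ) (f : (Fin n → Option Bool) → Bool) : Prop :=
  ∀ P Q : Fin n → Option Bool, countA n P ≤ countA n Q → countB n Q ≤ countB n P → f P ≤ f Q

section Characterization

variable {f : (Fin n → Option Bool) → Bool}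

theorem CountMonotone.anonymous (hf : CountMonotone n f) : Anonymous n f := fun σ P =>
  le_antisymm (hf _ _ (countA_comp_perm P σ).le (countB_comp_perm P σ).ge)
    (hf _ _ (countA_comp_perm P σ).ge (countB_comp_perm P σ).le)

theorem CountMonotone.nonManipulable (hf : CountMonotone n f) : NonManipulable n f := by
  intro v P q x hv hx
  have hA := countA_update P v q
  have hB := countB_update P v q
  rw [hv] at hA hB
  cases x with
  | false =>
    simp only [Option.some.injEq, Bool.false_eq_true, ↓reduceIte, add_zero] at hA hB
    simpa [hx] using Bool.le_iff_imp.1 (hf P (Function.update P v q)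
      (by split_ifs at hA <;> omega) (by split_ifs at hB <;> omega))
  | true =>
    simp only [↓reduceIte, Option.some.injEq, Bool.true_eq_false, add_zero] at hA hB
    exact Bool.le_iff_imp.1 (hf (Function.update P v q) P (by split_ifs at hA <;> omega)
      (by split_ifs at hB <;> omega)) hx

theorem NonManipulable.update_none_le (hf : NonManipulable n f) {P : Fin n → Option Bool}
    {v : Fin n} (hv : P v = some true) : f (Function.update P v none) ≤ f P :=
  Bool.le_iff_imp.2 (hf v P none true hv)

theorem NonManipulable.le_update_none (hf : NonManipulable n f) {P : Fin n → Option Bool}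
    {v : Fin n} (hv : P v = some false) : f P ≤ f (Function.update P v none) := by
  rw [Bool.le_iff_imp]
  contrapose!
  simpa using hf v P none false hv

theorem NonManipulable.countMonotone (hNM : NonManipulable n f) (hA : Anonymous n f) :
    CountMonotone n f := by
  suffices ∀ d P Q, countA n Q - countA n P + (countB n P - countB n Q) = d →
      countA n P ≤ countA n Q → countB n Q ≤ countB n P → f P ≤ f Q from
    fun P Q => this _ P Q rfl
  intro d
  induction d with
  | zero =>
    intro P Q hd hPQ hQP
    exact (hA.eq_of_counts_eq (by omega) (by omega)).le
  | succ d ih =>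
    intro P Q hd hPQ hQP
    rcases hPQ.lt_or_eq with hlt | heq
    · obtain ⟨v, hv⟩ : ∃ v, Q v = some true := by
        simpa using filter_nonempty_iff.1 (card_pos.1 (show 0 < countA n Q by omega))
      have hA' := countA_update Q v none
      have hB' := countB_update Q v none
      simp only [hv, Option.some.injEq, Bool.true_eq_false, ↓reduceIte, add_zero, reduceCtorEq]
        at hA' hB'
      exact (ih P _ (by omega) (by omega) (by omega)).trans (hNM.update_none_le hv)
    · obtain ⟨v, hv⟩ : ∃ v, P v = some false := by
        simpa using filter_nonempty_iff.1 (card_pos.1 (show 0 < countB n P by omega))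
      have hA' := countA_update P v none
      have hB' := countB_update P v none
      simp only [hv, Option.some.injEq, Bool.false_eq_true, ↓reduceIte, add_zero, reduceCtorEq]
        at hA' hB'
      exact (hNM.le_update_none hv).trans (ih _ Q (by omega) (by omega) (by omega))

theorem anonymous_and_nonManipulable_iff :
    Anonymous n f ∧ NonManipulable n f ↔ CountMonotone n f :=
  ⟨fun h => h.2.countMonotone h.1, fun h => ⟨h.anonymous, h.nonManipulable⟩⟩

end Characterization

def quotaRule (n : ℕ) (c : ℕ → Bool) (P : Fin n → Option Bool) : Bool :=
  decide (quota c (countA n P + countB n P) ≤ countA n P)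

theorem countMonotone_quotaRule (c : ℕ → Bool) : CountMonotone n (quotaRule n c) := by
  intro P Q hA hB
  simp only [quotaRule, Bool.le_iff_imp, decide_eq_true_eq]
  intro h
  calc quota c (countA n Q + countB n Q)
      ≤ quota c (countA n P + countB n P + (countA n Q - countA n P)) :=
        Nat.count_monotone _ (by omega)
    _ ≤ quota c (countA n P + countB n P) + (countA n Q - countA n P) := quota_le_quota_add _ _ _
    _ ≤ countA n Q := by omega

def threshold (n : ℕ) (f : (Fin n → Option Bool) → Bool) (m : ℕ) : ℕ :=
  Nat.count (fun a => f (stdProfile n a (m - a)) = false) (m + 1)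

section Threshold

variable {f : (Fin n → Option Bool) → Bool}

theorem CountMonotone.eq_false_of_stdProfile (hf : CountMonotone n f) {a b a' b' : ℕ}
    (ha : a ≤ a') (hb : min n (a' + b') - min n a' ≤ min n (a + b) - min n a)
    (h : f (stdProfile n a' b') = false) : f (stdProfile n a b) = false := by
  have := hf (stdProfile n a b) (stdProfile n a' b') (by simp only [countA_stdProfile]; omega)
    (by simpa only [countB_stdProfile] using hb)
  simpa [h] using Bool.le_iff_imp.1 this

theorem CountMonotone.eq_false_iff_lt_threshold (hf : CountMonotone n f) {a m : ℕ} (ha : a ≤ m) :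
    f (stdProfile n a (m - a)) = false ↔ a < threshold n f m :=
  Nat.lt_count_iff_of_antitone (fun _ _ hxy => hf.eq_false_of_stdProfile hxy (by omega)) (by omega)

theorem CountMonotone.threshold_le_threshold_succ (hf : CountMonotone n f) (m : ℕ) :
    threshold n f m ≤ threshold n f (m + 1) :=
  (Nat.count_mono_left fun _ _ => hf.eq_false_of_stdProfile le_rfl (by omega)).trans
    (Nat.count_monotone _ (Nat.le_succ _))

theorem CountMonotone.threshold_succ_le (hf : CountMonotone n f) (m : ℕ) :
    threshold n f (m + 1) ≤ threshold n f m + 1 := by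
  rw [threshold, add_comm (m + 1), Nat.count_add, add_comm]
  exact add_le_add (Nat.count_mono_left fun a _ => hf.eq_false_of_stdProfile (by omega) (by omega))
    (Nat.count_le _)

theorem CountMonotone.apply_eq_decide (hf : CountMonotone n f) (P : Fin n → Option Bool) :
    f P = decide (threshold n f (countA n P + countB n P) ≤ countA n P) := by
  have hn := card_none_add_countA_add_countB P
  have hP : f P = f (stdProfile n (countA n P) (countA n P + countB n P - countA n P)) :=
    hf.anonymous.eq_of_counts_eq (by rw [countA_stdProfile]; omega)
      (by rw [countB_stdProfile]; omega)
  rw [hP, Bool.eq_iff_iff, decide_eq_true_iff, ← not_lt,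
    ← hf.eq_false_iff_lt_threshold (Nat.le_add_right _ _), Bool.not_eq_false]

theorem CountMonotone.exists_eq_quotaRule (hf : CountMonotone n f) : ∃ c, f = quotaRule n c := by
  refine ⟨bitsOf (threshold n f), funext fun P => ?_⟩
  rw [quotaRule, quota_bitsOf (Nat.count_le _) hf.threshold_le_threshold_succ hf.threshold_succ_le,
    hf.apply_eq_decide]

end Threshold

theorem threshold_quotaRule (c : ℕ → Bool) {m : ℕ} (hm : m ≤ n) :
    threshold n (quotaRule n c) m = quota c m := by
  have hfalse : ∀ a < m + 1, quotaRule n c (stdProfile n a (m - a)) = false ↔ a < quota c m := by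
    intro a ha
    have h1 : min n a = a := by omega
    have h2 : min n m = m := by omega
    simp only [quotaRule, countA_stdProfile, countB_stdProfile,
      Nat.add_sub_cancel' (by omega : a ≤ m), h1, h2, decide_eq_false_iff_not, not_le]
  rw [threshold, Nat.count_eq_count_of_forall_lt_iff hfalse, Nat.count_lt_eq_min]
  exact min_eq_left (Nat.count_le _)

theorem quotaRule_eq_quotaRule_iff {c c' : ℕ → Bool} :
    quotaRule n c = quotaRule n c' ↔ ∀ i ≤ n, c i = c' i := by
  constructor
  · intro h i hi
    rw [Bool.eq_iff_iff]
    refine Nat.forall_iff_of_count_succ_eq (p := (c · = true)) (q := (c' · = true))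
      (fun m hm => ?_) i hi
    simpa only [threshold_quotaRule _ hm, quota] using congrArg (threshold n · m) h
  · intro h
    funext P
    have hn := card_none_add_countA_add_countB P
    rw [quotaRule, quotaRule, quota, quota,
      Nat.count_eq_count_of_forall_lt_iff fun k hk => by rw [h k (by omega)]]

end Profiles

/-- there are exactly `2 ^ (n + 1)` anonymous, non-manipulable binary
social choice functions on `n` voters who may declare indifference. -/
theorem stmt_13 (n : ℕ) :
    {f : (Fin n → Option Bool) → Bool |
      Anonymous n f ∧ NonManipulable n f}.ncard = 2 ^ (n + 1) := by
  let extend (d : Fin (n + 1) → Bool) : ℕ → Bool := Function.extend Fin.val d fun _ => false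
  have hextend (d : Fin (n + 1) → Bool) (i : Fin (n + 1)) : extend d i = d i :=
    Fin.val_injective.extend_apply _ _ _
  have hrange : {f | Anonymous n f ∧ NonManipulable n f} = Set.range (quotaRule n ∘ extend) := by
    ext f
    rw [Set.mem_ofPred_eq, anonymous_and_nonManipulable_iff]
    constructor
    · intro hf
      obtain ⟨c, rfl⟩ := hf.exists_eq_quotaRule
      exact ⟨fun i => c i, quotaRule_eq_quotaRule_iff.2 fun i hi => hextend _ ⟨i, by omega⟩⟩
    · rintro ⟨d, rfl⟩
      exact countMonotone_quotaRule _
  have hinj : Function.Injective (quotaRule n ∘ extend) := fun d d' h =>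
    funext fun i => by simpa [hextend] using quotaRule_eq_quotaRule_iff.1 h i (by omega)
  rw [hrange, Set.ncard_range_of_injective hinj, Nat.card_eq_fintype_card, Fintype.card_fun,
    Fintype.card_bool, Fintype.card_fin]
end

section
/- The map sending each subset J ⊆ {1,…,n} to the extended quota majority method φ_{(k_0,…,k_{r-1}, n+1)}, where r = |J| and the entries k_{r-1}, k_{r-2}, … are chosen alternately as min and max of the remaining elements of J (k_{r-1} = min J, k_{r-2} = max of J minus {k_{r-1}}, k_{r-3} = min of the rest, etc.), with the empty set mapped to the constant function b, produces a proper tuple for every J (i.e., the resulting tuple satisfies the alternating up-down condition around k_0 and ends with n+1). -/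
/-- Alternating min/max peeling of a finite set of naturals, with fuel:
`peelAux fuel true s` lists `min s`, then `max` of the rest, then `min` of the
rest, and so on. -/
def peelAux : ℕ → Bool → Finset ℕ → List ℕ
  | 0, _, _ => []
  | m + 1, b, s =>
    if h : s.Nonempty then
      (if b then s.min' h else s.max' h) ::
        peelAux m (!b) (s.erase (if b then s.min' h else s.max' h))
    else []

/-- `peel b s` peels off alternately the min (if `b`) and max of `s`. -/
def peel (b : Bool) (s : Finset ℕ) : List ℕ := peelAux s.card b s

def AltRecords (c : ℕ) (l : List ℕ) : Prop :=
  ∀ i j, j < i → i < l.length →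
    if Even (i + c) then l.getD j 0 < l.getD i 0 else l.getD i 0 < l.getD j 0

namespace AltRecords

variable {c : ℕ} {l : List ℕ}

theorem nil : AltRecords c [] := fun _ _ _ hi => absurd hi (Nat.not_lt_zero _)

theorem concat {y : ℕ} (h : AltRecords c l)
    (hy : ∀ z ∈ l, if Even (l.length + c) then z < y else y < z) :
    AltRecords c (l ++ [y]) := by
  intro i j hji hi
  rw [List.length_append, List.length_singleton] at hi
  have hj : (l ++ [y]).getD j 0 = l.getD j 0 := List.getD_append _ _ _ _ (by omega)
  rcases Nat.lt_succ_iff_lt_or_eq.mp hi with hi | rfl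
  · rw [List.getD_append _ _ _ _ hi, hj]
    exact h i j hji hi
  · rw [List.getD_append_right _ _ _ _ le_rfl, Nat.sub_self, hj,
      List.getD_eq_getElem _ _ (by omega)]
    exact hy _ (List.getElem_mem _)

theorem opposite_sides (h : AltRecords c l) {i : ℕ} (hi : i + 2 < l.length) :
    (l.getD (i + 1) 0 < l.getD 0 0 ∧ l.getD 0 0 < l.getD (i + 2) 0) ∨
      (l.getD (i + 2) 0 < l.getD 0 0 ∧ l.getD 0 0 < l.getD (i + 1) 0) := by
  have h₁ := h (i + 1) 0 (by omega) (by omega)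
  have h₂ := h (i + 2) 0 (by omega) (by omega)
  simp only [show i + 2 + c = i + 1 + c + 1 by omega, Nat.even_add_one] at h₂
  split_ifs at h₁ h₂ <;> tauto

theorem more_extreme (h : AltRecords c l) {i : ℕ} (hi : i + 3 < l.length) :
    (l.getD (i + 1) 0 < l.getD 0 0 → l.getD (i + 3) 0 < l.getD (i + 1) 0) ∧
      (l.getD 0 0 < l.getD (i + 1) 0 → l.getD (i + 1) 0 < l.getD (i + 3) 0) := by
  have h₁ := h (i + 1) 0 (by omega) (by omega)
  have h₃ := h (i + 3) (i + 1) (by omega) hi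
  simp only [show i + 3 + c = i + 1 + c + 1 + 1 by omega, Nat.even_add_one, not_not] at h₃
  split_ifs at h₁ h₃ <;> omega

theorem proper {n : ℕ} (h : AltRecords c l) (hlen : 2 ≤ l.length) (hnd : l.Nodup)
    (hle : ∀ x ∈ l, x ≤ n + 1) (hlast : l.getLast? = some 0 ∨ l.getLast? = some (n + 1)) :
    Proper n l :=
  ⟨hlen, hnd, hle, hlast, fun _ hi => h.opposite_sides hi, fun _ hi => h.more_extreme hi⟩

end AltRecords

theorem ite_min'_max'_mem {α : Type*} [LinearOrder α] {s : Finset α} (hs : s.Nonempty)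
    (b : Bool) :
    (if b then s.min' hs else s.max' hs) ∈ s := by
  cases b
  exacts [s.max'_mem hs, s.min'_mem hs]

theorem mem_of_mem_peelAux {m : ℕ} {b : Bool} {s : Finset ℕ} {x : ℕ}
    (hx : x ∈ peelAux m b s) : x ∈ s := by
  induction m generalizing b s with
  | zero => simp [peelAux] at hx
  | succ m ih =>
    by_cases hs : s.Nonempty
    · rw [peelAux, dif_pos hs] at hx
      rcases List.mem_cons.mp hx with rfl | hx
      exacts [ite_min'_max'_mem hs b, Finset.mem_of_mem_erase (ih hx)]
    · simp [peelAux, hs] at hx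

theorem nodup_peelAux (m : ℕ) (b : Bool) (s : Finset ℕ) : (peelAux m b s).Nodup := by
  induction m generalizing b s with
  | zero => simp [peelAux]
  | succ m ih =>
    by_cases hs : s.Nonempty
    · rw [peelAux, dif_pos hs]
      exact List.nodup_cons.mpr
        ⟨fun hx => Finset.notMem_erase _ _ (mem_of_mem_peelAux hx), ih _ _⟩
    · simp [peelAux, hs]

/-- `c` is chosen so that the last entry of the reversed list, the first one peeled, is a new
minimum exactly when `b` is `true`. -/
theorem altRecords_reverse_peelAux (m : ℕ) (b : Bool) (s : Finset ℕ) (c : ℕ)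
    (hc : Even ((peelAux m b s).length + c) ↔ b = true) :
    AltRecords c (peelAux m b s).reverse := by
  induction m generalizing b s with
  | zero => simpa [peelAux] using AltRecords.nil
  | succ m ih =>
    by_cases hs : s.Nonempty
    · rw [peelAux, dif_pos hs] at hc ⊢
      rw [List.length_cons, Nat.add_right_comm, Nat.even_add_one] at hc
      rw [List.reverse_cons]
      refine (ih _ _ (by cases b <;> simp_all)).concat fun z hz => ?_
      have hz := mem_of_mem_peelAux (List.mem_reverse.mp hz)
      have hzs := Finset.mem_of_mem_erase hz
      have hzx := Finset.ne_of_mem_erase hz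
      rw [List.length_reverse]
      cases b
      · simp only [Bool.false_eq_true, if_false, Bool.not_false, iff_false, not_not] at hc hzx ⊢
        rw [if_pos hc]
        exact lt_of_le_of_ne (s.le_max' z hzs) hzx
      · simp only [if_true, Bool.not_true, iff_true] at hc hzx ⊢
        rw [if_neg hc]
        exact lt_of_le_of_ne (s.min'_le z hzs) (Ne.symm hzx)
    · simpa [peelAux, hs] using AltRecords.nil

/-- `peel true J` lists `k_{r-1}, k_{r-2}, …, k_0`, so the tuple is its reverse followed by
`n + 1`. -/
theorem stmt_14_general (n : ℕ) (J : Finset ℕ)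
    (hJ : J ⊆ Finset.Icc 1 n) (hne : J.Nonempty) :
    Proper n ((peel true J).reverse ++ [n + 1]) := by
  set p := peel true J
  have hp : ∀ x ∈ p, x ≤ n := fun x hx => (Finset.mem_Icc.mp (hJ (mem_of_mem_peelAux hx))).2
  have hp_ne : p ≠ [] := by
    obtain ⟨m, hm⟩ := Nat.exists_eq_succ_of_ne_zero (Finset.card_pos.mpr hne).ne'
    simp [p, peel, hm, peelAux, hne]
  have hrec : AltRecords p.length p.reverse :=
    altRecords_reverse_peelAux _ _ _ _ (by simp [p, peel])
  refine (hrec.concat fun z hz => ?_).proper ?_ ?_ ?_ ?_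
  · simpa using hp z (List.mem_reverse.mp hz)
  · simpa [Nat.one_le_iff_ne_zero] using hp_ne
  · rw [← List.concat_eq_append]
    exact (List.nodup_reverse.mpr (nodup_peelAux _ _ _)).concat
      fun h => (hp _ (List.mem_reverse.mp h)).not_gt (Nat.lt_succ_self n)
  · intro x hx
    rcases List.mem_append.mp hx with hx | hx
    · exact (hp x (List.mem_reverse.mp hx)).trans (Nat.le_succ n)
    · exact (List.mem_singleton.mp hx).le
  · exact Or.inr List.getLast?_concat

/-- for every nonempty `J ⊆ {1, …, n}`, the tuple
`(k_0, …, k_{r-1}, n+1)` obtained by assigning `k_{r-1} = min J`,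
`k_{r-2} = max` of the rest, alternating, is a proper tuple. (`peel true J` lists
`k_{r-1}, k_{r-2}, …, k_0`, so the tuple is its reverse followed by `n+1`.) -/
theorem stmt_14 (n : ℕ) (hn : 1 ≤ n) (J : Finset ℕ)
    (hJ : J ⊆ Finset.Icc 1 n) (hne : J.Nonempty) :
    Proper n ((peel true J).reverse ++ [n + 1]) :=
  stmt_14_general n J hJ hne
end

section
/- Let φ be a non-manipulable binary social choice function on n voters (profiles allow indifference) that is anonymous, and let F be a collection of subsets of the voter set V closed under supersets. Suppose D ∈ F with |D| = ρ minimal among members of F, and F satisfies (D(a,P) ∈ F ⟹ φ(P) = a) and (D(b,P) ∈ F° ⟹ φ(P) = b), where F° = {E : V∖E ∉ F}. Then every set F with |F| ≥ ρ belongs to F, i.e. F = {E ⊆ V : |E| ≥ ρ}. -/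
/-- the committee of an anonymous non-manipulable scf is of cardinal
type: if `F` is superset-closed, decides `φ` (a whenever `D(a,P) ∈ F`, b whenever
`D(b,P)` is in the dual of `F`), and `D ∈ F` has minimal cardinality, then every
set of cardinality at least `|D|` belongs to `F`. -/
theorem stmt_15 (n : ℕ) (f : (Fin n → Option Bool) → Bool)
    (hanon : Anonymous n f) (hnm : NonManipulable n f)
    (F : Set (Finset (Fin n)))
    (hsup : ∀ A B : Finset (Fin n), A ∈ F → A ⊆ B → B ∈ F)
    (D : Finset (Fin n)) (hD : D ∈ F) (hmin : ∀ E ∈ F, D.card ≤ E.card)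
    (ha : ∀ P : Fin n → Option Bool,
      (Finset.univ.filter fun v => P v = some true) ∈ F → f P = true)
    (hb : ∀ P : Fin n → Option Bool,
      (Finset.univ.filter fun v => P v = some false)ᶜ ∉ F → f P = false) :
    ∀ E : Finset (Fin n), D.card ≤ E.card → E ∈ F := by
  -- Key: every set of cardinality exactly `D.card` is in `F`.
  have key : ∀ E : Finset (Fin n), E.card = D.card → E ∈ F := by
    intro E hcard
    by_contra hE
    -- profile where members of S vote a, others vote b
    set PS : Finset (Fin n) → (Fin n → Option Bool) :=
      fun S v => if v ∈ S then some true else some false with hPS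
    have hfilt : ∀ S : Finset (Fin n),
        (Finset.univ.filter fun v => PS S v = some true) = S := by
      intro S
      ext v
      simp only [Finset.mem_filter, Finset.mem_univ, true_and, hPS]
      by_cases h : v ∈ S <;> simp [h]
    have hfiltb : ∀ S : Finset (Fin n),
        (Finset.univ.filter fun v => PS S v = some false) = Sᶜ := by
      intro S
      ext v
      simp only [Finset.mem_filter, Finset.mem_univ, true_and, Finset.mem_compl, hPS]
      by_cases h : v ∈ S <;> simp [h]
    have hfD : f (PS D) = true := ha _ (by rw [hfilt]; exact hD)
    have hfE : f (PS E) = false := by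
      apply hb
      rw [hfiltb, compl_compl]
      exact hE
    -- anonymity: permute `E` to `D`
    have e : {x : Fin n // x ∈ E} ≃ {x : Fin n // x ∈ D} :=
      Finset.equivOfCardEq hcard
    have hcomp : PS D ∘ e.extendSubtype = PS E := by
      funext v
      simp only [Function.comp_apply, hPS]
      by_cases h : v ∈ E
      · have := e.extendSubtype_mem v h
        simp [h, this]
      · have h2 : ¬ (e.extendSubtype v ∈ D) := by
          rw [e.extendSubtype_apply_of_not_mem v h]
          exact (e.toCompl ⟨v, h⟩).2
        simp [h, h2]
    have := hanon e.extendSubtype (PS D)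
    rw [hcomp, hfE, hfD] at this
    exact Bool.false_ne_true this
  intro E hle
  obtain ⟨E', hsub, hcard⟩ := Finset.exists_subset_card_eq hle
  exact hsup E' E (key E' hcard) hsub
end

section
/- Minimality equals properness: among all tuples 𝐤 = (k_0,…,k_r) of distinct elements of {0,…,n+1} with k_r ∈ {0,n+1} representing a fixed onto extended quota majority method φ (i.e., φ_𝐤 = φ), a tuple has minimum length r if and only if it is proper (satisfies the alternating up-down condition). In particular any non-proper representation admits a strictly shorter representation of the same function obtained by deleting one entry. -/
/-- Tuples considered in the minimality statement: at least two distinct entries,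
all entries except the last lie in `{1, …, n}`, and the last entry is `0` or `n+1`
(so the "length", the least index of an extreme entry, is `l.length - 1`). -/
def Valid19 (n : ℕ) (l : List ℕ) : Prop :=
  2 ≤ l.length ∧ l.Nodup ∧ (∀ x ∈ l.dropLast, 1 ≤ x ∧ x ≤ n) ∧
  (l.getLast? = some 0 ∨ l.getLast? = some (n + 1))

def exitsBelow (a b : ℕ) : List ℕ → Bool
  | [] => false
  | k :: t => if k ≤ a then true else if b < k then false else exitsBelow a b t

theorem countA_le (n : ℕ) (P : Fin n → Option Bool) : countA n P ≤ n :=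
  (Finset.card_filter_le _ _).trans_eq (Finset.card_fin n)

theorem phi_eq_exitsBelow (n : ℕ) (l : List ℕ) (P : Fin n → Option Bool) :
    phi n l P = exitsBelow (countA n P) (n - countB n P) l := by
  induction l with
  | nil => simpa [phi, exitsBelow] using countA_le n P
  | cons k t ih =>
    have hits_iff : hits n P k = decide (k ≤ countA n P ∨ n - countB n P < k) := by
      simp only [hits, decide_eq_decide]; omega
    rw [exitsBelow, ← ih]
    by_cases hA : k ≤ countA n P <;> by_cases hB : n - countB n P < k <;>
      simp [phi, List.findIdx_cons, hits_iff, hA, hB]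

def intervalProfile (n a b : ℕ) : Fin n → Option Bool := fun v =>
  if (v : ℕ) < a then some true else if (v : ℕ) < b then none else some false

theorem countA_intervalProfile {n a b : ℕ} (ha : a ≤ n) :
    countA n (intervalProfile n a b) = a := by
  have : (Finset.univ.filter fun v => intervalProfile n a b v = some true) =
      Finset.univ.filter fun v : Fin n => (v : ℕ) < a := by
    refine Finset.filter_congr fun v _ => ?_
    unfold intervalProfile
    split_ifs <;> simp <;> omega
  rw [countA, this, Fin.card_filter_val_lt]
  omega

theorem countB_intervalProfile {n a b : ℕ} (hab : a ≤ b) (hb : b ≤ n) :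
    countB n (intervalProfile n a b) = n - b := by
  have hfilter : (Finset.univ.filter fun v => intervalProfile n a b v = some false) =
      Finset.univ.filter fun v : Fin n => ¬ (v : ℕ) < b := by
    refine Finset.filter_congr fun v _ => ?_
    unfold intervalProfile
    split_ifs <;> simp <;> omega
  have hcard := Finset.card_filter_add_card_filter_not (s := Finset.univ)
    (fun v : Fin n => (v : ℕ) < b)
  rw [Fin.card_filter_val_lt, Finset.card_fin] at hcard
  rw [countB, hfilter]
  omega

theorem exitsBelow_eq_of_phi_eq {n : ℕ} {l l' : List ℕ} (h : phi n l = phi n l') {a b : ℕ}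
    (hab : a ≤ b) (hb : b ≤ n) : exitsBelow a b l = exitsBelow a b l' := by
  have := congrFun h (intervalProfile n a b)
  rwa [phi_eq_exitsBelow, phi_eq_exitsBelow, countA_intervalProfile (hab.trans hb),
    countB_intervalProfile hab hb, Nat.sub_sub_self hb] at this

section exitsBelow

variable {a b : ℕ}

theorem exitsBelow_eq_of_forall_lt {l : List ℕ} {γ : ℕ} (hγ : γ < l.length)
    (hpre : ∀ j < γ, a < l.getD j 0 ∧ l.getD j 0 ≤ b)
    (hout : l.getD γ 0 ≤ a ∨ b < l.getD γ 0) :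
    exitsBelow a b l = decide (l.getD γ 0 ≤ a) := by
  induction l generalizing γ with
  | nil => simp at hγ
  | cons k t ih =>
    cases γ with
    | zero =>
      simp only [List.getD_cons_zero] at hout ⊢
      rw [exitsBelow]
      split_ifs <;> simp_all
    | succ γ =>
      have hk := hpre 0 (Nat.zero_lt_succ γ)
      simp only [List.getD_cons_zero] at hk
      rw [exitsBelow, if_neg (by omega), if_neg (by omega), List.getD_cons_succ]
      exact ih (by simpa using hγ) (fun j hj => by simpa using hpre (j + 1) (by omega))
        (by simpa using hout)

theorem exitsBelow_append_congr {u v w : List ℕ}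
    (h : (∀ x ∈ u, a < x ∧ x ≤ b) → exitsBelow a b v = exitsBelow a b w) :
    exitsBelow a b (u ++ v) = exitsBelow a b (u ++ w) := by
  induction u with
  | nil => simpa using h
  | cons k u ih =>
    simp only [List.cons_append, exitsBelow]
    split_ifs with hka hbk
    · rfl
    · rfl
    · exact ih fun hu => h fun x hx => by
        rcases List.mem_cons.mp hx with rfl | hx
        · omega
        · exact hu x hx

/-- An entry `k`, preceded by `u` and followed by `k'`, that the scan can ignore: once the window
contains `u`, either it contains `k` too, or `k` and `k'` exit it on the same side. -/
def Skippable (u : List ℕ) (k k' : ℕ) : Prop :=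
  ((∃ x ∈ u, x < k) ∧ ∃ y ∈ u, k < y) ∨ ((∃ y ∈ u, k < y) ∧ k' < k) ∨
    ((∃ x ∈ u, x < k) ∧ k < k')

theorem exitsBelow_append_cons_cons {u w : List ℕ} {k k' : ℕ} (h : Skippable u k k') :
    exitsBelow a b (u ++ k :: k' :: w) = exitsBelow a b (u ++ k' :: w) := by
  apply exitsBelow_append_congr
  intro hu
  rcases h with ⟨⟨x, hx, hxk⟩, y, hy, hky⟩ | ⟨⟨y, hy, hky⟩, hk'⟩ | ⟨⟨x, hx, hxk⟩, hk'⟩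
  · have := hu x hx; have := hu y hy
    rw [exitsBelow, if_neg (by omega), if_neg (by omega)]
  · have := hu y hy
    by_cases hka : k ≤ a
    · simp only [exitsBelow, hka, if_true, show k' ≤ a by omega]
    · rw [exitsBelow, if_neg hka, if_neg (by omega)]
  · have := hu x hx
    by_cases hbk : b < k
    · simp only [exitsBelow, if_neg (show ¬ k ≤ a by omega), hbk, if_true,
        if_neg (show ¬ k' ≤ a by omega), show b < k' by omega]
    · rw [exitsBelow, if_neg (by omega), if_neg hbk]

theorem mem_Ioc_of_exitsBelow_ne {a' b' k : ℕ} {t : List ℕ} (hab : a ≤ b) (ha : a' ≤ a)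
    (hb : b ≤ b') (h : exitsBelow a' b' (k :: t) ≠ exitsBelow a b (k :: t)) :
    k ∈ Set.Ioc a' b' := by
  by_contra hk
  rcases not_and_or.mp hk with hk | hk <;> simp only [exitsBelow] at h <;>
    split_ifs at h <;> first | exact h rfl | omega

theorem lt_length_of_flips {A B : ℕ → ℕ} (hAB : ∀ i, A i ≤ B i) (hA : Antitone A)
    (hB : Monotone B) {m : ℕ} {l : List ℕ}
    (hflip : ∀ i < m, exitsBelow (A (i + 1)) (B (i + 1)) l ≠ exitsBelow (A i) (B i) l)
    (hout : ∃ z ∈ l, z ≤ A m ∨ B m < z) : m < l.length := by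
  induction l generalizing A B m with
  | nil => simp at hout
  | cons k t ih =>
    cases m with
    | zero => simp
    | succ m =>
      -- `k` exits the window `0` but not the window `1`, hence no later window either.
      obtain ⟨hk₁, hk₂⟩ := mem_Ioc_of_exitsBelow_ne (hAB 0) (hA (Nat.zero_le 1))
        (hB (Nat.zero_le 1)) (hflip 0 m.succ_pos)
      have skip : ∀ i, exitsBelow (A (i + 1)) (B (i + 1)) (k :: t) =
          exitsBelow (A (i + 1)) (B (i + 1)) t := fun i => by
        have := hA (Nat.le_add_left 1 i); have := hB (Nat.le_add_left 1 i)
        rw [exitsBelow, if_neg (by omega), if_neg (by omega)]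
      have hout' : ∃ z ∈ t, z ≤ A (m + 1) ∨ B (m + 1) < z := by
        obtain ⟨z, hz, hzout⟩ := hout
        rcases List.mem_cons.mp hz with rfl | hz
        · have := hA (Nat.le_add_left 1 m); have := hB (Nat.le_add_left 1 m)
          omega
        · exact ⟨z, hz, hzout⟩
      have := ih (A := fun i => A (i + 1)) (B := fun i => B (i + 1)) (fun i => hAB _)
        (fun i j hij => hA (by omega)) (fun i j hij => hB (by omega))
        (fun i hi => by simpa only [skip] using hflip (i + 1) (by omega)) hout'
      simpa using this

theorem exitsBelow_eraseIdx {γ : ℕ} {l : List ℕ} (hγ : γ + 1 < l.length)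
    (h : Skippable (l.take γ) (l.getD γ 0) (l.getD (γ + 1) 0)) :
    exitsBelow a b (l.eraseIdx γ) = exitsBelow a b l := by
  have hdrop : ∀ i, i < l.length → l.drop i = l.getD i 0 :: l.drop (i + 1) := fun i hi => by
    rw [List.drop_eq_getElem_cons hi, List.getD_eq_getElem _ _ hi]
  conv_rhs => rw [← List.take_append_drop γ l, hdrop γ (by omega), hdrop (γ + 1) hγ]
  rw [List.eraseIdx_eq_take_drop_succ, hdrop (γ + 1) hγ]
  exact (exitsBelow_append_cons_cons h).symm

end exitsBelow

theorem phi_eraseIdx {n γ : ℕ} {l : List ℕ} (hγ : γ + 1 < l.length)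
    (h : Skippable (l.take γ) (l.getD γ 0) (l.getD (γ + 1) 0)) :
    phi n (l.eraseIdx γ) = phi n l := by
  funext P
  rw [phi_eq_exitsBelow, phi_eq_exitsBelow, exitsBelow_eraseIdx hγ h]

theorem forall_mem_take_iff_getD {l : List ℕ} {γ : ℕ} (hγ : γ ≤ l.length) {p : ℕ → Prop} :
    (∀ x ∈ l.take γ, p x) ↔ ∀ j < γ, p (l.getD j 0) := by
  simp only [List.mem_take_iff_getElem, forall_exists_index]
  constructor
  · intro h j hj
    exact h _ j (by omega) (List.getD_eq_getElem _ _ (by omega)).symm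
  · rintro h _ j hj rfl
    have := h j (by omega)
    rwa [List.getD_eq_getElem _ _ (by omega)] at this

namespace Valid19

variable {n : ℕ} {l : List ℕ}

theorem getD_mem_Icc (hv : Valid19 n l) {i : ℕ} (hi : i + 1 < l.length) :
    1 ≤ l.getD i 0 ∧ l.getD i 0 ≤ n := by
  have hi' : i < l.dropLast.length := by rw [List.length_dropLast]; omega
  rw [List.getD_eq_getElem _ _ (by omega)]
  simpa using hv.2.2.1 _ (List.getElem_mem hi')

theorem getD_last (hv : Valid19 n l) :
    l.getD (l.length - 1) 0 = 0 ∨ l.getD (l.length - 1) 0 = n + 1 := by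
  have hl : l ≠ [] := List.ne_nil_of_length_pos (by have := hv.1; omega)
  rw [List.getD_eq_getElem _ _ (by have := hv.1; omega), ← List.getLast_eq_getElem hl]
  simpa [List.getLast?_eq_some_getLast hl] using hv.2.2.2

theorem le_succ_of_mem (hv : Valid19 n l) {x : ℕ} (hx : x ∈ l) : x ≤ n + 1 := by
  obtain ⟨i, hi, rfl⟩ := List.mem_iff_getElem.mp hx
  rw [← List.getD_eq_getElem _ 0 hi]
  by_cases hlast : i + 1 < l.length
  · exact (hv.getD_mem_Icc hlast).2.trans n.le_succ
  · rw [show i = l.length - 1 by omega]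
    rcases hv.getD_last with h | h <;> omega

theorem getD_ne (hv : Valid19 n l) {i j : ℕ} (hij : i ≠ j) (hi : i < l.length)
    (hj : j < l.length) : l.getD i 0 ≠ l.getD j 0 := by
  rw [List.getD_eq_getElem _ _ hi, List.getD_eq_getElem _ _ hj]
  exact fun h => hij (hv.2.1.getElem_inj_iff.mp h)

theorem eraseIdx (hv : Valid19 n l) {γ : ℕ} (h1 : 1 ≤ γ) (h2 : γ + 1 < l.length) :
    Valid19 n (l.eraseIdx γ) := by
  obtain ⟨hlen, hnd, hint, hlast⟩ := hv
  obtain rfl | ⟨u, z, rfl⟩ := List.eq_nil_or_concat' l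
  · simp at hlen
  simp only [List.length_append, List.length_singleton] at hlen h2
  rw [List.eraseIdx_append_of_lt_length (by omega)]
  rw [List.dropLast_concat] at hint
  refine ⟨?_, hnd.sublist ((List.eraseIdx_sublist u γ).append_right [z]), ?_, ?_⟩
  · rw [List.length_append, List.length_eraseIdx_of_lt (by omega), List.length_singleton]
    omega
  · simpa using fun x hx => hint x (List.eraseIdx_subset hx)
  · simpa using hlast

end Valid19

def IsRecord (l : List ℕ) (γ : ℕ) : Prop :=
  (l.getD γ 0 < l.getD 0 0 → ∀ j < γ, l.getD γ 0 < l.getD j 0) ∧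
    (l.getD 0 0 < l.getD γ 0 → ∀ j < γ, l.getD j 0 < l.getD γ 0)

def Alternates (l : List ℕ) : Prop :=
  ∀ i, i + 2 < l.length →
    (l.getD (i + 1) 0 < l.getD 0 0 ∧ l.getD 0 0 < l.getD (i + 2) 0) ∨
    (l.getD (i + 2) 0 < l.getD 0 0 ∧ l.getD 0 0 < l.getD (i + 1) 0)

section records

variable {n : ℕ} {l : List ℕ}

theorem isRecord_zero (l : List ℕ) : IsRecord l 0 :=
  ⟨fun _ _ hj => absurd hj (Nat.not_lt_zero _), fun _ _ hj => absurd hj (Nat.not_lt_zero _)⟩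

theorem Proper.alternates (hp : Proper n l) : Alternates l := hp.2.2.2.2.1

/-- `k_{γ-2}` lies on the side of `k_γ` and is less extreme by the last clause of `Proper`;
entries on the other side are separated from `k_γ` by `k_0`. -/
theorem Proper.isRecord (hp : Proper n l) {γ : ℕ} (hγ : γ < l.length) : IsRecord l γ := by
  obtain ⟨-, -, -, -, halt, hmono⟩ := hp
  induction γ using Nat.strong_induction_on with
  | _ γ ih =>
    refine ⟨fun hside j hj => ?_, fun hside j hj => ?_⟩ <;> obtain _ | j := j <;> try assumption
    all_goals
      have hj := halt j (by omega)
      obtain ⟨g, rfl⟩ : ∃ g, γ = g + 2 := ⟨γ - 2, by omega⟩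
      have hg := halt g (by omega)
      obtain rfl | hjg := eq_or_ne j g
      · omega
      obtain ⟨g, rfl⟩ : ∃ g', g = g' + 1 := ⟨g - 1, by omega⟩
      have hg' := halt g (by omega)
      have hm := hmono g (by omega)
      have hrec := ih (g + 1) (by omega) (by omega)
      simp only [IsRecord, Nat.add_assoc, Nat.reduceAdd] at *
      obtain rfl | hjg' := eq_or_ne j g
      · omega
    · have := hrec.1 (by omega) (j + 1) (by omega); omega
    · have := hrec.2 (by omega) (j + 1) (by omega); omega

theorem proper_of_isRecord (hv : Valid19 n l) (halt : Alternates l)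
    (hrec : ∀ γ < l.length, IsRecord l γ) : Proper n l := by
  refine ⟨hv.1, hv.2.1, fun x => hv.le_succ_of_mem, hv.2.2.2, halt, fun i hi => ?_⟩
  have h₁ := halt i (by omega)
  have h₂ := halt (i + 1) (by omega)
  have h₃ := hrec (i + 3) hi
  simp only [IsRecord, Nat.add_assoc, Nat.reduceAdd] at h₂ h₃
  exact ⟨fun h => by have := h₃.1 (by omega) (i + 1) (by omega); omega,
    fun h => by have := h₃.2 (by omega) (i + 1) (by omega); omega⟩

end records

theorem forall_lt_or_forall_gt_of_not_skippable {u : List ℕ} {k k' : ℕ} (hu : u ≠ [])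
    (hk : k ∉ u) (hkk' : k ≠ k') (h : ¬ Skippable u k k') :
    ((∀ x ∈ u, k < x) ∧ k < k') ∨ ((∀ x ∈ u, x < k) ∧ k' < k) := by
  have hne : ∀ x ∈ u, x ≠ k := fun x hx hxk => hk (hxk ▸ hx)
  by_cases hlow : ∃ x ∈ u, x < k
  · refine Or.inr ⟨fun y hy => ?_, ?_⟩
    · by_contra hy'
      exact h (Or.inl ⟨hlow, y, hy, by have := hne y hy; omega⟩)
    · by_contra hk'
      exact h (Or.inr (Or.inr ⟨hlow, by omega⟩))
  · push Not at hlow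
    refine Or.inl ⟨fun x hx => by have := hlow x hx; have := hne x hx; omega, ?_⟩
    obtain ⟨y, hy⟩ := List.exists_mem_of_ne_nil u hu
    by_contra hk'
    exact h (Or.inr (Or.inl ⟨⟨y, hy, by have := hlow y hy; have := hne y hy; omega⟩, by omega⟩))

theorem proper_of_forall_not_skippable {n : ℕ} {l : List ℕ} (hv : Valid19 n l)
    (h : ∀ γ, 1 ≤ γ → γ + 1 < l.length →
      ¬ Skippable (l.take γ) (l.getD γ 0) (l.getD (γ + 1) 0)) :
    Proper n l := by
  have extreme : ∀ γ, 1 ≤ γ → γ + 1 < l.length →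
      ((∀ j < γ, l.getD γ 0 < l.getD j 0) ∧ l.getD γ 0 < l.getD (γ + 1) 0) ∨
      ((∀ j < γ, l.getD j 0 < l.getD γ 0) ∧ l.getD (γ + 1) 0 < l.getD γ 0) := by
    intro γ h₁ h₂
    have hk : l.getD γ 0 ∉ l.take γ := fun hmem =>
      (forall_mem_take_iff_getD (by omega)).mpr
        (fun j hj => hv.getD_ne (by omega) (by omega) (by omega)) _ hmem rfl
    have hu : l.take γ ≠ [] := List.ne_nil_of_length_pos (by rw [List.length_take]; omega)
    have := forall_lt_or_forall_gt_of_not_skippable hu hk (hv.getD_ne (by omega) (by omega) h₂)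
      (h γ h₁ h₂)
    simpa only [forall_mem_take_iff_getD (show γ ≤ l.length by omega)] using this
  have hrec : ∀ γ < l.length, IsRecord l γ := by
    intro γ hγ
    obtain rfl | h₁ := Nat.eq_zero_or_pos γ
    · exact isRecord_zero l
    by_cases h₂ : γ + 1 < l.length
    · rcases extreme γ h₁ h₂ with ⟨hlow, -⟩ | ⟨hhigh, -⟩
      · exact ⟨fun _ => hlow, fun h => by have := hlow 0 h₁; omega⟩
      · exact ⟨fun h => by have := hhigh 0 h₁; omega, fun _ => hhigh⟩
    · obtain rfl : γ = l.length - 1 := by omega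
      have hmid := fun j (hj : j < l.length - 1) => hv.getD_mem_Icc (i := j) (by omega)
      have := hmid 0 h₁
      rcases hv.getD_last with h0 | h0 <;> rw [IsRecord, h0] <;>
        exact ⟨fun _ j hj => by have := hmid j hj; omega,
          fun _ j hj => by have := hmid j hj; omega⟩
  refine proper_of_isRecord hv (fun i hi => ?_) hrec
  have hne := hv.getD_ne (i := i + 2) (j := 0) (by omega) hi (by omega)
  have hnext := hrec (i + 2) hi
  simp only [IsRecord] at hnext
  rcases extreme (i + 1) (by omega) (by omega) with ⟨hlow, hup⟩ | ⟨hhigh, hdown⟩ <;>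
    simp only [Nat.add_assoc, Nat.reduceAdd] at *
  · have := hlow 0 (by omega)
    have := fun h => hnext.1 h (i + 1) (by omega)
    omega
  · have := hhigh 0 (by omega)
    have := fun h => hnext.2 h (i + 1) (by omega)
    omega

def hullMin (l : List ℕ) (γ : ℕ) : ℕ :=
  (Finset.range (γ + 1)).inf' Finset.nonempty_range_add_one (l.getD · 0)

def hullMax (l : List ℕ) (γ : ℕ) : ℕ :=
  (Finset.range (γ + 1)).sup' Finset.nonempty_range_add_one (l.getD · 0)

/-- Stage `γ + 1` is the window `(min - 1, max]` spanned by `k_0, …, k_γ`; stage `0` is an empty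
window at `k_0`, placed so that `k_0` exits it on the side opposite to `k_1`. -/
def stageLow (l : List ℕ) : ℕ → ℕ
  | 0 => if l.getD 0 0 < l.getD 1 0 then l.getD 0 0 else l.getD 0 0 - 1
  | γ + 1 => hullMin l γ - 1

def stageHigh (l : List ℕ) : ℕ → ℕ
  | 0 => stageLow l 0
  | γ + 1 => hullMax l γ

section stages

variable {n : ℕ} {l : List ℕ}

theorem hullMin_le {γ j : ℕ} (hj : j ≤ γ) : hullMin l γ ≤ l.getD j 0 :=
  Finset.inf'_le _ (Finset.mem_range.mpr (by omega))

theorem le_hullMax {γ j : ℕ} (hj : j ≤ γ) : l.getD j 0 ≤ hullMax l γ :=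
  Finset.le_sup' (fun j => l.getD j 0) (Finset.mem_range.mpr (by omega))

theorem hullMin_zero : hullMin l 0 = l.getD 0 0 := by simp [hullMin]

theorem hullMax_zero : hullMax l 0 = l.getD 0 0 := by simp [hullMax]

theorem stageLow_le_stageHigh (l : List ℕ) (γ : ℕ) : stageLow l γ ≤ stageHigh l γ := by
  cases γ with
  | zero => exact le_rfl
  | succ γ => exact (Nat.sub_le _ 1).trans ((hullMin_le γ.zero_le).trans (le_hullMax γ.zero_le))

theorem antitone_stageLow (l : List ℕ) : Antitone (stageLow l) := by
  refine antitone_nat_of_succ_le fun γ => ?_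
  cases γ with
  | zero => simp only [stageLow, hullMin_zero]; split_ifs <;> omega
  | succ γ =>
    exact Nat.sub_le_sub_right (Finset.inf'_mono _ (Finset.range_subset_range.mpr (by omega))
      Finset.nonempty_range_add_one) 1

theorem monotone_stageHigh (l : List ℕ) : Monotone (stageHigh l) := by
  refine monotone_nat_of_le_succ fun γ => ?_
  cases γ with
  | zero => simp only [stageHigh, stageLow, hullMax_zero]; split_ifs <;> omega
  | succ γ =>
    exact Finset.sup'_mono _ (Finset.range_subset_range.mpr (by omega))
      Finset.nonempty_range_add_one

theorem Valid19.stageHigh_le (hv : Valid19 n l) {γ : ℕ} (hγ : γ < l.length) :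
    stageHigh l γ ≤ n := by
  cases γ with
  | zero =>
    have := hv.getD_mem_Icc (i := 0) (by have := hv.1; omega)
    simp only [stageHigh, stageLow]; split_ifs <;> omega
  | succ γ =>
    exact Finset.sup'_le Finset.nonempty_range_add_one _ fun j hj =>
      (hv.getD_mem_Icc (by have := Finset.mem_range.mp hj; omega)).2

theorem Valid19.exitsBelow_stage_zero (hv : Valid19 n l) :
    exitsBelow (stageLow l 0) (stageHigh l 0) l = decide (l.getD 0 0 < l.getD 1 0) := by
  have hlen := hv.1
  have := hv.getD_mem_Icc (i := 0) (by omega)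
  simp only [stageHigh]
  rw [exitsBelow_eq_of_forall_lt (γ := 0) (by omega) (fun j hj => absurd hj (Nat.not_lt_zero j))
    (le_or_gt _ _)]
  simp only [stageLow]
  split_ifs <;> simp only [decide_eq_decide] <;> omega

theorem Valid19.exitsBelow_stage_succ (hv : Valid19 n l) {γ : ℕ} (hγ : γ + 1 < l.length)
    (hrec : IsRecord l (γ + 1)) :
    exitsBelow (stageLow l (γ + 1)) (stageHigh l (γ + 1)) l =
      decide (l.getD (γ + 1) 0 < l.getD 0 0) := by
  have hne := hv.getD_ne (i := γ + 1) (j := 0) (by omega) hγ (by omega)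
  have hmin := hullMin_le (l := l) γ.zero_le
  have hmax := le_hullMax (l := l) γ.zero_le
  have hout : l.getD (γ + 1) 0 < hullMin l γ ∨ hullMax l γ < l.getD (γ + 1) 0 := by
    rcases Nat.lt_or_gt_of_ne hne with hlow | hhigh
    · exact .inl <| (Finset.lt_inf'_iff _).mpr fun j hj =>
        hrec.1 hlow j (Finset.mem_range.mp hj)
    · exact .inr <| (Finset.sup'_lt_iff _).mpr fun j hj =>
        hrec.2 hhigh j (Finset.mem_range.mp hj)
  simp only [stageLow, stageHigh]
  rw [exitsBelow_eq_of_forall_lt hγ (fun j hj => ?_) (by omega)]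
  · simp only [decide_eq_decide]; omega
  · have := hv.getD_mem_Icc (i := j) (by omega)
    have := hullMin_le (l := l) (Nat.le_of_lt_succ hj)
    exact ⟨by omega, le_hullMax (Nat.le_of_lt_succ hj)⟩

end stages

theorem Proper.length_le {n : ℕ} {l l' : List ℕ} (hp : Proper n l) (hv : Valid19 n l)
    (hv' : Valid19 n l') (h : phi n l' = phi n l) : l.length ≤ l'.length := by
  have hlen := hv.1
  have on_l : ∀ γ < l.length, exitsBelow (stageLow l γ) (stageHigh l γ) l' =
      exitsBelow (stageLow l γ) (stageHigh l γ) l := fun γ hγ =>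
    exitsBelow_eq_of_phi_eq h (stageLow_le_stageHigh l γ) (hv.stageHigh_le hγ)
  have hflip : ∀ i < l.length - 1, exitsBelow (stageLow l (i + 1)) (stageHigh l (i + 1)) l' ≠
      exitsBelow (stageLow l i) (stageHigh l i) l' := by
    intro i hi
    rw [on_l _ (by omega), on_l _ (by omega), hv.exitsBelow_stage_succ (by omega)
      (hp.isRecord (by omega))]
    cases i with
    | zero =>
      have := hv.getD_ne (i := 1) (j := 0) one_ne_zero (by omega) (by omega)
      rw [hv.exitsBelow_stage_zero]
      simp only [Nat.zero_add, ne_eq, decide_eq_decide]; omega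
    | succ i =>
      have := hp.alternates i (by omega)
      rw [hv.exitsBelow_stage_succ (by omega) (hp.isRecord (by omega))]
      simp only [Nat.add_assoc, Nat.reduceAdd, ne_eq, decide_eq_decide]; omega
  have hout : ∃ z ∈ l', z ≤ stageLow l (l.length - 1) ∨ stageHigh l (l.length - 1) < z := by
    have := hv.stageHigh_le (γ := l.length - 1) (by omega)
    rcases hv'.2.2.2 with h0 | h0
    · exact ⟨0, List.mem_of_getLast? h0, .inl (Nat.zero_le _)⟩
    · exact ⟨n + 1, List.mem_of_getLast? h0, .inr (by omega)⟩
  have := lt_length_of_flips (stageLow_le_stageHigh l) (antitone_stageLow l)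
    (monotone_stageHigh l) hflip hout
  omega

theorem stmt_19_general (n : ℕ) (l : List ℕ) (hv : Valid19 n l) :
    (Proper n l ↔
      ∀ l' : List ℕ, Valid19 n l' → phi n l' = phi n l →
        l.length - 1 ≤ l'.length - 1) ∧
    (¬ Proper n l → ∃ γ, γ + 1 < l.length ∧ Valid19 n (l.eraseIdx γ) ∧
      phi n (l.eraseIdx γ) = phi n l) := by
  have shorten : ¬ Proper n l → ∃ γ, γ + 1 < l.length ∧ Valid19 n (l.eraseIdx γ) ∧
      phi n (l.eraseIdx γ) = phi n l := fun hnp => by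
    obtain ⟨γ, hγ₁, hγ, hskip⟩ : ∃ γ, 1 ≤ γ ∧ γ + 1 < l.length ∧
        Skippable (l.take γ) (l.getD γ 0) (l.getD (γ + 1) 0) := by
      by_contra! h
      exact hnp (proper_of_forall_not_skippable hv h)
    exact ⟨γ, hγ, hv.eraseIdx hγ₁ hγ, phi_eraseIdx hγ hskip⟩
  refine ⟨⟨fun hp l' hv' h => ?_, fun hmin => ?_⟩, shorten⟩
  · have := hp.length_le hv hv' h
    omega
  · by_contra hnp
    obtain ⟨γ, hγ, hv', h⟩ := shorten hnp
    have := hmin _ hv' h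
    rw [List.length_eraseIdx_of_lt (by omega)] at this
    have := hv.1
    omega

/-- for an onto extended quota majority method, a representing tuple
has minimum length iff it is proper; moreover any non-proper representation can be
strictly shortened by deleting one entry. -/
theorem stmt_19 (n : ℕ) (hn : 1 ≤ n) (l : List ℕ) (hv : Valid19 n l)
    (honto : Function.Surjective (phi n l)) :
    (Proper n l ↔
      ∀ l' : List ℕ, Valid19 n l' → phi n l' = phi n l →
        l.length - 1 ≤ l'.length - 1) ∧
    (¬ Proper n l → ∃ γ, γ + 1 < l.length ∧ Valid19 n (l.eraseIdx γ) ∧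
      phi n (l.eraseIdx γ) = phi n l) :=
  stmt_19_general n l hv
end
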